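/- arXiv:1401.8233 — 6 statements merged into one kernel-verified Lean document; each statement's English description precedes it below -/
import Mathlib

section
/- Let g : ℝ × ℝⁿ → ℝⁿ be a smooth one-parameter group of diffeomorphisms (g⁰ = id and g^{τ+ρ} = g^τ ∘ g^ρ) with generating vector field v(x) = (d/dτ)|_{τ=0} g^τ(x). Assume each g^τ preserves the potential, V(g^τ(x)) = V(x), and is an isometry of the metric: Σ_{k,l} a_{kl}(g^τ(x)) (∂g^τᵏ/∂xⁱ)(x) (∂g^τˡ/∂xʲ)(x) = a_{ij}(x) for all x, i, j, τ. Then along every motion q of the natural system, the momentum J(t) = Σ_{i,j} a_{ij}(q(t)) vⁱ(q(t)) q̇ʲ(t) is constant in t. -/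
open scoped BigOperators

private lemma cycle3 {n : ℕ} (f : Fin n → Fin n → Fin n → ℝ) :
    ∑ i, ∑ j, ∑ k, f i j k = ∑ j, ∑ k, ∑ i, f i j k := by
  rw [Finset.sum_comm]
  exact Finset.sum_congr rfl fun j _ => Finset.sum_comm

private lemma swap23 {n : ℕ} (f : Fin n → Fin n → Fin n → ℝ) :
    ∑ i, ∑ j, ∑ k, f i j k = ∑ i, ∑ k, ∑ j, f i j k :=
  Finset.sum_congr rfl fun _ _ => Finset.sum_comm

private lemma alg {n : ℕ} (a Dv : Fin n → Fin n → ℝ) (da : Fin n → Fin n → Fin n → ℝ)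
    (dV vv w : Fin n → ℝ)
    (hsym : ∀ i j, a i j = a j i)
    (hkill : ∀ j k, (∑ i, vv i * da i j k) + (∑ i, a i k * Dv j i) + (∑ i, a j i * Dv k i) = 0)
    (hV0 : ∑ i, vv i * dV i = 0) :
    ∑ i, ((∑ k, w k * Dv k i) * (∑ j, a i j * w j)
      + vv i * ((1/2) * (∑ j, ∑ k, da i j k * w j * w k) - dV i)) = 0 := by
  simp only [mul_sub, Finset.mul_sum, Finset.sum_mul, Finset.sum_sub_distrib,
    Finset.sum_add_distrib]
  rw [hV0, sub_zero]
  have hK : ∀ j k : Fin n, (∑ i, (1/2*(w j * w k)) * (vv i * da i j k))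
      = (∑ i, -((1/2*(w j * w k)) * (a i k * Dv j i)))
        + (∑ i, -((1/2*(w j * w k)) * (a j i * Dv k i))) := by
    intro j k
    have h0 : (∑ i, (1/2*(w j * w k)) * (vv i * da i j k))
        + (∑ i, (1/2*(w j * w k)) * (a i k * Dv j i))
        + (∑ i, (1/2*(w j * w k)) * (a j i * Dv k i)) = 0 := by
      simp only [← Finset.mul_sum]
      have := hkill j k
      linear_combination (1/2*(w j * w k)) * this
    simp only [Finset.sum_neg_distrib]
    linarith
  have S2eq : (∑ x : Fin n, ∑ x_1 : Fin n, ∑ i : Fin n, vv x * (1 / 2 * (da x x_1 i * w x_1 * w i)))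
      = (∑ j, ∑ k, ∑ i, -((1/2*(w j * w k)) * (a i k * Dv j i)))
        + (∑ j, ∑ k, ∑ i, -((1/2*(w j * w k)) * (a j i * Dv k i))) := by
    rw [cycle3 (fun x x_1 i => vv x * (1 / 2 * (da x x_1 i * w x_1 * w i))), ← Finset.sum_add_distrib]
    refine Finset.sum_congr rfl fun j _ => ?_
    rw [← Finset.sum_add_distrib]
    refine Finset.sum_congr rfl fun k _ => ?_
    rw [← hK j k]
    exact Finset.sum_congr rfl fun i _ => by ring
  rw [S2eq]
  simp only [Finset.sum_neg_distrib]
  have e1 : (∑ j, ∑ k, ∑ i, (1/2*(w j * w k)) * (a i k * Dv j i))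
      = (1/2) * (∑ x, ∑ x_1, ∑ i, w i * Dv i x * (a x x_1 * w x_1)) := by
    rw [cycle3 (fun j k i => (1/2*(w j * w k)) * (a i k * Dv j i)),
        cycle3 (fun k i j => (1/2*(w j * w k)) * (a i k * Dv j i)),
        swap23 (fun i j k => (1/2*(w j * w k)) * (a i k * Dv j i))]
    simp only [Finset.mul_sum]
    refine Finset.sum_congr rfl fun i _ => Finset.sum_congr rfl fun k _ =>
      Finset.sum_congr rfl fun j _ => by ring
  have e2 : (∑ j, ∑ k, ∑ i, (1/2*(w j * w k)) * (a j i * Dv k i))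
      = (1/2) * (∑ x, ∑ x_1, ∑ i, w i * Dv i x * (a x x_1 * w x_1)) := by
    rw [cycle3 (fun j k i => (1/2*(w j * w k)) * (a j i * Dv k i)),
        cycle3 (fun k i j => (1/2*(w j * w k)) * (a j i * Dv k i))]
    simp only [Finset.mul_sum]
    refine Finset.sum_congr rfl fun i _ => Finset.sum_congr rfl fun j _ =>
      Finset.sum_congr rfl fun k _ => ?_
    rw [hsym j i]; ring
  linarith

private lemma clm_sum_single {n : ℕ} (L : (Fin n → ℝ) →L[ℝ] ℝ) (u : Fin n → ℝ) :
    L u = ∑ k, u k * L (Pi.single k 1) := by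
  have hu : u = ∑ k, u k • (Pi.single k 1 : Fin n → ℝ) := by
    conv_lhs => rw [pi_eq_sum_univ u]
    refine Finset.sum_congr rfl fun k _ => ?_
    congr 1
    funext j
    simp [Pi.single_apply, eq_comm]
  conv_lhs => rw [hu]
  rw [map_sum]
  simp [smul_eq_mul]

/-- The partial derivative of `f : ℝⁿ → ℝ` in the `i`-th coordinate direction at `x`. -/
noncomputable def pderiv' {n : ℕ} (i : Fin n) (f : (Fin n → ℝ) → ℝ) (x : Fin n → ℝ) : ℝ :=
  fderiv ℝ f x (Pi.single i 1)

/-- Noether's momentum integral: if a smooth one-parameter group of diffeomorphisms `g`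
with generating vector field `v` preserves the potential `V` and acts by isometries of the
kinetic-energy metric `A`, then along every motion `q` of the natural system the momentum
`J = Σᵢⱼ aᵢⱼ(q) vⁱ(q) q̇ʲ` is constant in time. -/
theorem momentum_first_integral {n : ℕ}
    (A : (Fin n → ℝ) → Matrix (Fin n) (Fin n) ℝ)
    (V : (Fin n → ℝ) → ℝ)
    (hA : ∀ i j, ContDiff ℝ (⊤ : ℕ∞) fun x => A x i j)
    (hAsymm : ∀ x, (A x).IsSymm)
    (hApos : ∀ x, (A x).PosDef)
    (hV : ContDiff ℝ (⊤ : ℕ∞) V)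
    (g : ℝ → (Fin n → ℝ) → (Fin n → ℝ))
    (hg : ContDiff ℝ (⊤ : ℕ∞) fun p : ℝ × (Fin n → ℝ) => g p.1 p.2)
    (hg0 : g 0 = id)
    (hgadd : ∀ τ ρ : ℝ, g (τ + ρ) = g τ ∘ g ρ)
    (v : (Fin n → ℝ) → (Fin n → ℝ))
    (hv : ∀ x, HasDerivAt (fun τ => g τ x) (v x) 0)
    (hgV : ∀ (τ : ℝ) (x : Fin n → ℝ), V (g τ x) = V x)
    (hgiso : ∀ (τ : ℝ) (x : Fin n → ℝ) (i j : Fin n),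
      ∑ k, ∑ l, A (g τ x) k l
          * fderiv ℝ (fun y => g τ y k) x (Pi.single i 1)
          * fderiv ℝ (fun y => g τ y l) x (Pi.single j 1)
        = A x i j)
    (q : ℝ → Fin n → ℝ)
    (hq : ContDiff ℝ (⊤ : ℕ∞) q)
    (hmotion : ∀ (i : Fin n) (t : ℝ),
      HasDerivAt (fun s => ∑ j, A (q s) i j * deriv q s j)
        ((1 / 2) * (∑ j, ∑ k, pderiv' i (fun x => A x j k) (q t) * deriv q t j * deriv q t k)
          - pderiv' i V (q t)) t) :
    ∀ s t : ℝ,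
      (∑ i, ∑ j, A (q s) i j * v (q s) i * deriv q s j)
        = ∑ i, ∑ j, A (q t) i j * v (q t) i * deriv q t j := by
  -- coordinates of `g` as smooth functions on `ℝ × ℝⁿ`
  have hgc : ∀ k : Fin n, ContDiff ℝ (⊤ : ℕ∞) (fun p : ℝ × (Fin n → ℝ) => g p.1 p.2 k) := fun k =>
    (ContinuousLinearMap.proj (R := ℝ) (φ := fun _ : Fin n => ℝ) k).contDiff.comp hg
  have hgd : ∀ (k : Fin n) (p : ℝ × (Fin n → ℝ)),
      DifferentiableAt ℝ (fun p : ℝ × (Fin n → ℝ) => g p.1 p.2 k) p := fun k p =>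
    ((hgc k).differentiable (by simp)).differentiableAt
  have hcurve : ∀ x : Fin n → ℝ, HasDerivAt (fun τ : ℝ => (τ, x)) ((1:ℝ), (0 : Fin n → ℝ)) 0 :=
    fun x => (hasDerivAt_id 0).prodMk (hasDerivAt_const 0 x)
  have hg0x : ∀ x : Fin n → ℝ, g 0 x = x := fun x => by rw [hg0]; rfl
  -- formula for v in terms of the full derivative of g
  have hv1 : ∀ (x : Fin n → ℝ) (k : Fin n),
      v x k = fderiv ℝ (fun p : ℝ × (Fin n → ℝ) => g p.1 p.2 k) (0, x) (1, 0) := by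
    intro x k
    have h1 : HasDerivAt (fun τ => g τ x k) (v x k) 0 := by
      have := (ContinuousLinearMap.proj (R := ℝ) (φ := fun _ : Fin n => ℝ)
        k).hasFDerivAt.comp_hasDerivAt 0 (hv x)
      simpa [Function.comp_def] using this
    have h2 : HasDerivAt (fun τ => g τ x k)
        (fderiv ℝ (fun p : ℝ × (Fin n → ℝ) => g p.1 p.2 k) (0, x) (1, 0)) 0 := by
      have := (hgd k (0, x)).hasFDerivAt.comp_hasDerivAt 0 (hcurve x)
      simpa [Function.comp_def] using this
    exact h1.unique h2
  -- the spatial partial derivatives of g in terms of the full derivative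
  have hfd : ∀ (τ : ℝ) (x : Fin n → ℝ) (k : Fin n) (w : Fin n → ℝ),
      fderiv ℝ (fun y => g τ y k) x w
        = fderiv ℝ (fun p : ℝ × (Fin n → ℝ) => g p.1 p.2 k) (τ, x) (0, w) := by
    intro τ x k w
    have hins : HasFDerivAt (fun y : Fin n → ℝ => (τ, y))
        (ContinuousLinearMap.inr ℝ ℝ (Fin n → ℝ)) x :=
      (hasFDerivAt_const τ x).prodMk (hasFDerivAt_id x)
    have hc : HasFDerivAt (fun y => g τ y k)
        ((fderiv ℝ (fun p : ℝ × (Fin n → ℝ) => g p.1 p.2 k) (τ, x)).comp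
          (ContinuousLinearMap.inr ℝ ℝ (Fin n → ℝ))) x := by
      have := (hgd k (τ, x)).hasFDerivAt.comp x hins
      simpa [Function.comp_def] using this
    rw [hc.fderiv]
    simp
  -- smoothness of the derivative of g
  have hΦ : ∀ k : Fin n, ContDiff ℝ 1 (fderiv ℝ (fun p : ℝ × (Fin n → ℝ) => g p.1 p.2 k)) :=
    fun k => (hgc k).fderiv_right (by exact WithTop.coe_le_coe.mpr le_top)
  have hvk_eq : ∀ k : Fin n, (fun y => v y k)
      = fun y => fderiv ℝ (fun p : ℝ × (Fin n → ℝ) => g p.1 p.2 k) (0, y) (1, 0) :=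
    fun k => funext fun y => hv1 y k
  have hvkC : ∀ k : Fin n, ContDiff ℝ 1 (fun y => v y k) := by
    intro k
    rw [hvk_eq k]
    exact ((hΦ k).comp (contDiff_const.prodMk contDiff_id)).clm_apply contDiff_const
  -- the swap of the τ- and x-derivatives
  have hswap : ∀ (x : Fin n → ℝ) (k : Fin n) (u : Fin n → ℝ),
      HasDerivAt (fun τ => fderiv ℝ (fun y => g τ y k) x u)
        (fderiv ℝ (fun y => v y k) x u) 0 := by
    intro x k u
    have hΦd : DifferentiableAt ℝ
        (fderiv ℝ (fun p : ℝ × (Fin n → ℝ) => g p.1 p.2 k)) (0, x) :=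
      ((hΦ k).differentiable one_ne_zero).differentiableAt
    have hsymm :
        fderiv ℝ (fderiv ℝ (fun p : ℝ × (Fin n → ℝ) => g p.1 p.2 k)) (0, x) (1, 0) (0, u)
          = fderiv ℝ (fderiv ℝ (fun p : ℝ × (Fin n → ℝ) => g p.1 p.2 k)) (0, x) (0, u) (1, 0) :=
      second_derivative_symmetric (fun y => (hgd k y).hasFDerivAt) hΦd.hasFDerivAt _ _
    have hL : HasDerivAt
        (fun τ => fderiv ℝ (fun p : ℝ × (Fin n → ℝ) => g p.1 p.2 k) (τ, x) (0, u))
        (fderiv ℝ (fderiv ℝ (fun p : ℝ × (Fin n → ℝ) => g p.1 p.2 k)) (0, x) (1, 0) (0, u)) 0 := by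
      have h1 : HasDerivAt (fun τ => fderiv ℝ (fun p : ℝ × (Fin n → ℝ) => g p.1 p.2 k) (τ, x))
          (fderiv ℝ (fderiv ℝ (fun p : ℝ × (Fin n → ℝ) => g p.1 p.2 k)) (0, x) (1, 0)) 0 := by
        have := hΦd.hasFDerivAt.comp_hasDerivAt 0 (hcurve x)
        simpa [Function.comp_def] using this
      have := (ContinuousLinearMap.apply ℝ ℝ ((0:ℝ), u)).hasFDerivAt.comp_hasDerivAt 0 h1
      simpa [Function.comp_def] using this
    have hR : fderiv ℝ (fun y => v y k) x u
        = fderiv ℝ (fderiv ℝ (fun p : ℝ × (Fin n → ℝ) => g p.1 p.2 k)) (0, x) (0, u) (1, 0) := by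
      rw [hvk_eq k]
      have hins : HasFDerivAt (fun y : Fin n → ℝ => ((0:ℝ), y))
          (ContinuousLinearMap.inr ℝ ℝ (Fin n → ℝ)) x :=
        (hasFDerivAt_const _ x).prodMk (hasFDerivAt_id x)
      have h2 : HasFDerivAt
          (fun y : Fin n → ℝ => fderiv ℝ (fun p : ℝ × (Fin n → ℝ) => g p.1 p.2 k) (0, y))
          ((fderiv ℝ (fderiv ℝ (fun p : ℝ × (Fin n → ℝ) => g p.1 p.2 k)) (0, x)).comp
            (ContinuousLinearMap.inr ℝ ℝ (Fin n → ℝ))) x := by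
        have := hΦd.hasFDerivAt.comp x hins
        simpa [Function.comp_def] using this
      have h3 : HasFDerivAt
          (fun y : Fin n → ℝ => fderiv ℝ (fun p : ℝ × (Fin n → ℝ) => g p.1 p.2 k) (0, y) (1, 0))
          ((ContinuousLinearMap.apply ℝ ℝ ((1:ℝ), (0 : Fin n → ℝ))).comp
            ((fderiv ℝ (fderiv ℝ (fun p : ℝ × (Fin n → ℝ) => g p.1 p.2 k)) (0, x)).comp
              (ContinuousLinearMap.inr ℝ ℝ (Fin n → ℝ)))) x := by
        have := (ContinuousLinearMap.apply ℝ ℝ ((1:ℝ), (0 : Fin n → ℝ))).hasFDerivAt.comp x h2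
        simpa [Function.comp_def] using this
      rw [h3.fderiv]
      simp
    have heq : (fun τ => fderiv ℝ (fun y => g τ y k) x u)
        = fun τ => fderiv ℝ (fun p : ℝ × (Fin n → ℝ) => g p.1 p.2 k) (τ, x) (0, u) :=
      funext fun τ => hfd τ x k u
    rw [heq, hR, ← hsymm]
    exact hL
  -- Killing equation
  have hkillpt : ∀ (x : Fin n → ℝ) (i j : Fin n),
      fderiv ℝ (fun y => A y i j) x (v x)
        + (∑ k, A x k j * fderiv ℝ (fun y => v y k) x (Pi.single i 1))
        + (∑ l, A x i l * fderiv ℝ (fun y => v y l) x (Pi.single j 1)) = 0 := by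
    intro x i j
    have hFconst : HasDerivAt (fun τ => ∑ k, ∑ l, A (g τ x) k l
        * fderiv ℝ (fun y => g τ y k) x (Pi.single i 1)
        * fderiv ℝ (fun y => g τ y l) x (Pi.single j 1)) 0 0 := by
      have heq : (fun τ => ∑ k, ∑ l, A (g τ x) k l
          * fderiv ℝ (fun y => g τ y k) x (Pi.single i 1)
          * fderiv ℝ (fun y => g τ y l) x (Pi.single j 1)) = fun _ => A x i j :=
        funext fun τ => hgiso τ x i j
      rw [heq]
      exact hasDerivAt_const 0 _
    have hAkl : ∀ k l : Fin n, HasDerivAt (fun τ => A (g τ x) k l)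
        (fderiv ℝ (fun y => A y k l) x (v x)) 0 := by
      intro k l
      have hdA : HasFDerivAt (fun y => A y k l) (fderiv ℝ (fun y => A y k l) x) (g 0 x) := by
        rw [hg0x x]
        exact (((hA k l).differentiable (by simp)) x).hasFDerivAt
      have := hdA.comp_hasDerivAt 0 (hv x)
      simpa [Function.comp_def] using this
    have hDi : ∀ k : Fin n, HasDerivAt
        (fun τ => fderiv ℝ (fun y => g τ y k) x (Pi.single i 1))
        (fderiv ℝ (fun y => v y k) x (Pi.single i 1)) 0 := fun k => hswap x k _
    have hDj : ∀ l : Fin n, HasDerivAt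
        (fun τ => fderiv ℝ (fun y => g τ y l) x (Pi.single j 1))
        (fderiv ℝ (fun y => v y l) x (Pi.single j 1)) 0 := fun l => hswap x l _
    have hF' : HasDerivAt (fun τ => ∑ k, ∑ l, A (g τ x) k l
        * fderiv ℝ (fun y => g τ y k) x (Pi.single i 1)
        * fderiv ℝ (fun y => g τ y l) x (Pi.single j 1))
        (∑ k, ∑ l,
          ((fderiv ℝ (fun y => A y k l) x (v x)
              * fderiv ℝ (fun y => g 0 y k) x (Pi.single i 1)
            + A (g 0 x) k l * fderiv ℝ (fun y => v y k) x (Pi.single i 1))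
            * fderiv ℝ (fun y => g 0 y l) x (Pi.single j 1)
          + A (g 0 x) k l * fderiv ℝ (fun y => g 0 y k) x (Pi.single i 1)
            * fderiv ℝ (fun y => v y l) x (Pi.single j 1))) 0 :=
      HasDerivAt.fun_sum fun k _ => HasDerivAt.fun_sum fun l _ =>
        (((hAkl k l).mul (hDi k)).mul (hDj l))
    have h0 := hF'.unique hFconst
    -- compute the spatial derivatives of g 0 = id
    have hid : ∀ (k : Fin n) (m : Fin n), fderiv ℝ (fun y => g 0 y k) x (Pi.single m 1)
        = (Pi.single m 1 : Fin n → ℝ) k := by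
      intro k m
      have heq : (fun y : Fin n → ℝ => g 0 y k) = fun y => y k := by
        funext y; rw [hg0x y]
      rw [heq]
      have hp : HasFDerivAt (fun y : Fin n → ℝ => y k)
          (ContinuousLinearMap.proj (R := ℝ) (φ := fun _ : Fin n => ℝ) k) x :=
        (ContinuousLinearMap.proj (R := ℝ) (φ := fun _ : Fin n => ℝ) k).hasFDerivAt
      rw [hp.fderiv]
      rfl
    simp only [hid, hg0x x] at h0
    rw [← h0]
    simp only [Pi.single_apply, Finset.sum_add_distrib, add_mul, mul_ite, ite_mul,
      mul_one, one_mul, mul_zero, zero_mul, Finset.sum_ite_eq', Finset.mem_univ, if_true]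
    rw [Finset.sum_comm]
    simp [Finset.sum_ite_eq']
  -- invariance of V
  have hVpt : ∀ x : Fin n → ℝ, fderiv ℝ V x (v x) = 0 := by
    intro x
    have hdV : HasFDerivAt V (fderiv ℝ V x) (g 0 x) := by
      rw [hg0x x]
      exact ((hV.differentiable (by simp)) x).hasFDerivAt
    have h1 : HasDerivAt (fun τ => V (g τ x)) (fderiv ℝ V x (v x)) 0 := by
      have := hdV.comp_hasDerivAt 0 (hv x)
      simpa [Function.comp_def] using this
    have h2 : HasDerivAt (fun τ => V (g τ x)) 0 0 := by
      have heq : (fun τ => V (g τ x)) = fun _ => V x := funext fun τ => hgV τ x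
      rw [heq]; exact hasDerivAt_const 0 _
    exact h1.unique h2
  -- conservation of momentum
  have hJ0 : ∀ t : ℝ, HasDerivAt
      (fun s => ∑ i, v (q s) i * (∑ j, A (q s) i j * deriv q s j)) 0 t := by
    intro t
    have hq' : HasDerivAt q (deriv q t) t := ((hq.differentiable (by simp)) t).hasDerivAt
    have hvterm : ∀ i : Fin n, HasDerivAt (fun s => v (q s) i)
        (fderiv ℝ (fun y => v y i) (q t) (deriv q t)) t := by
      intro i
      have := (((hvkC i).differentiable one_ne_zero) (q t)).hasFDerivAt.comp_hasDerivAt t hq'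
      simpa [Function.comp_def] using this
    have hsum : HasDerivAt (fun s => ∑ i, v (q s) i * (∑ j, A (q s) i j * deriv q s j))
        (∑ i, (fderiv ℝ (fun y => v y i) (q t) (deriv q t) * (∑ j, A (q t) i j * deriv q t j)
          + v (q t) i * ((1 / 2) * (∑ j, ∑ k, pderiv' i (fun x => A x j k) (q t)
              * deriv q t j * deriv q t k) - pderiv' i V (q t)))) t :=
      HasDerivAt.fun_sum fun i _ => (hvterm i).mul (hmotion i t)
    have hzero : (∑ i, (fderiv ℝ (fun y => v y i) (q t) (deriv q t)
        * (∑ j, A (q t) i j * deriv q t j)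
          + v (q t) i * ((1 / 2) * (∑ j, ∑ k, pderiv' i (fun x => A x j k) (q t)
              * deriv q t j * deriv q t k) - pderiv' i V (q t)))) = 0 := by
      have hs := alg (fun i j => A (q t) i j)
        (fun m i => fderiv ℝ (fun y => v y i) (q t) (Pi.single m 1))
        (fun i j k => pderiv' i (fun x => A x j k) (q t))
        (fun i => pderiv' i V (q t)) (v (q t)) (deriv q t)
        (fun i j => (hAsymm (q t)).apply j i)
        ?_ ?_
      · rw [← hs]
        refine Finset.sum_congr rfl fun i _ => ?_
        rw [clm_sum_single (fderiv ℝ (fun y => v y i) (q t)) (deriv q t)]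
      · intro j k
        have hk := hkillpt (q t) j k
        rw [clm_sum_single (fderiv ℝ (fun y => A y j k) (q t)) (v (q t))] at hk
        simpa [pderiv'] using hk
      · have h0 := hVpt (q t)
        rw [clm_sum_single (fderiv ℝ V (q t)) (v (q t))] at h0
        simpa [pderiv'] using h0
    rw [← hzero]
    exact hsum
  intro s t
  have hconst := is_const_of_deriv_eq_zero
    (f := fun s => ∑ i, v (q s) i * (∑ j, A (q s) i j * deriv q s j))
    (fun u => (hJ0 u).differentiableAt) (fun u => (hJ0 u).deriv) s t
  have hJeq : ∀ u : ℝ, (∑ i, ∑ j, A (q u) i j * v (q u) i * deriv q u j)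
      = ∑ i, v (q u) i * (∑ j, A (q u) i j * deriv q u j) := by
    intro u
    refine Finset.sum_congr rfl fun i _ => ?_
    rw [Finset.mul_sum]
    exact Finset.sum_congr rfl fun j _ => by ring
  rw [hJeq s, hJeq t, hconst]
end

section
/- Suppose a smooth curve q : (τ₀, τ₁) → U satisfies the curvature equation q″ⁱ + Σ_{j,k} Γ̄ⁱ_{jk}(q) q′ʲ q′ᵏ = Σ_{k,j} ā^{ik}(q) κ̄_{kj}(q) q′ʲ of the Jacobi metric m_h, and is parametrized by m_h-arclength: 2(h − V(q(τ))) Σ_{i,j} a_{ij}(q(τ)) q′ⁱ(τ) q′ʲ(τ) = 1 for all τ. Let t(τ) be the strictly increasing solution of dt/dτ = 1/(2(h − V(q(τ)))) and τ(t) its inverse. Then the curve x(t) = q(τ(t)) satisfies the equations of motion with gyroscopic forces, ẍⁱ + Σ_{j,k} Γⁱ_{jk}(x) ẋʲ ẋᵏ + Σ_j a^{ij}(x) (∂V/∂xʲ)(x) = Σ_{k,j} a^{ik}(x) κ̄_{kj}(x) ẋʲ, and has total energy h: ½ Σ_{i,j} a_{ij}(x(t)) ẋⁱ ẋʲ + V(x(t))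 = h for all t. -/
open scoped BigOperators

/-- The partial derivative of `f : ℝᵐ → ℝ` in the `i`-th coordinate direction at `x`. -/
noncomputable def pd {m : ℕ} (i : Fin m) (f : (Fin m → ℝ) → ℝ) (x : Fin m → ℝ) : ℝ :=
  fderiv ℝ f x (Pi.single i 1)

/-- The Christoffel symbols `Γⁱ_{jk} = ½ Σ_l aⁱˡ (∂ⱼ a_{lk} + ∂ₖ a_{lj} − ∂_l a_{jk})`
of the metric with matrix `A`. -/
noncomputable def christoffel {m : ℕ} (A : (Fin m → ℝ) → Matrix (Fin m) (Fin m) ℝ)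
    (x : Fin m → ℝ) (i j k : Fin m) : ℝ :=
  (1 / 2) * ∑ l, (A x)⁻¹ i l *
    (pd j (fun y => A y l k) x + pd k (fun y => A y l j) x - pd l (fun y => A y j k) x)

lemma fderiv_apply_eq_sum_pd {m : ℕ} (f : (Fin m → ℝ) → ℝ) (P v : Fin m → ℝ) :
    fderiv ℝ f P v = ∑ l, v l * pd l f P := by
  conv_lhs => rw [← Finset.univ_sum_single v, map_sum]
  refine Finset.sum_congr rfl fun l _ => ?_
  have h1 : Pi.single l (v l) = v l • (Pi.single l 1 : Fin m → ℝ) := by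
    ext j
    by_cases hj : j = l <;> simp [Pi.single_apply, hj]
  rw [h1, map_smul, smul_eq_mul, pd]

lemma hasDerivAt_comp_pd {m : ℕ} {f : (Fin m → ℝ) → ℝ} {q : ℝ → Fin m → ℝ} {v : Fin m → ℝ} {τ : ℝ}
    (hf : DifferentiableAt ℝ f (q τ)) (hq : HasDerivAt q v τ) :
    HasDerivAt (fun σ => f (q σ)) (∑ l, v l * pd l f (q τ)) τ := by
  have h1 := hf.hasFDerivAt.comp_hasDerivAt τ hq
  rwa [fderiv_apply_eq_sum_pd] at h1

lemma pd_mul {m : ℕ} {f g : (Fin m → ℝ) → ℝ} {P : Fin m → ℝ} (j : Fin m)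
    (hf : DifferentiableAt ℝ f P) (hg : DifferentiableAt ℝ g P) :
    pd j (fun y => f y * g y) P = pd j f P * g P + f P * pd j g P := by
  unfold pd
  rw [fderiv_fun_mul hf hg]
  simp only [ContinuousLinearMap.add_apply, ContinuousLinearMap.smul_apply, smul_eq_mul]
  ring

lemma pd_F {m : ℕ} {V : (Fin m → ℝ) → ℝ} {h : ℝ} {P : Fin m → ℝ} (j : Fin m)
    (hV : DifferentiableAt ℝ V P) :
    pd j (fun y => 2 * (h - V y)) P = -2 * pd j V P := by
  have h1 : (fun y => 2 * (h - V y)) = fun y => 2 * h - 2 * V y := by funext y; ring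
  have H : HasFDerivAt (fun y => 2 * h - 2 * V y) (-((2:ℝ) • fderiv ℝ V P)) P :=
    ((hV.hasFDerivAt.const_mul (2:ℝ)).const_sub (2*h))
  rw [pd, h1, H.fderiv]
  simp [pd]

lemma smul_matrix_inv {m : ℕ} (c : ℝ) (hc : c ≠ 0) (B : Matrix (Fin m) (Fin m) ℝ)
    (hB : IsUnit B.det) : (c • B)⁻¹ = c⁻¹ • B⁻¹ := by
  apply Matrix.inv_eq_right_inv
  rw [Matrix.smul_mul, Matrix.mul_smul, smul_smul, mul_inv_cancel₀ hc,
    Matrix.mul_nonsing_inv _ hB, one_smul]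

lemma christoffel_conformal {m : ℕ} (A : (Fin m → ℝ) → Matrix (Fin m) (Fin m) ℝ)
    (V : (Fin m → ℝ) → ℝ) (h : ℝ) (P : Fin m → ℝ)
    (hAd : ∀ l k, DifferentiableAt ℝ (fun y => A y l k) P)
    (hVd : DifferentiableAt ℝ V P)
    (hdet : IsUnit (A P).det)
    (hc : (2 * (h - V P)) ≠ 0)
    (i j k : Fin m) :
    christoffel (fun y => (2 * (h - V y)) • A y) P i j k
      = christoffel A P i j k + (1 / (2 * (2 * (h - V P)))) *
        ((-2 * pd j V P) * (if i = k then 1 else 0)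
         + (-2 * pd k V P) * (if i = j then 1 else 0)
         - (∑ l, (A P)⁻¹ i l * (-2 * pd l V P)) * A P j k) := by
  classical
  set c := 2 * (h - V P) with hcdef
  have hFd : DifferentiableAt ℝ (fun y => 2 * (h - V y)) P := (hVd.const_sub h).const_mul 2
  have hpd : ∀ (r : Fin m) (l k' : Fin m),
      pd r (fun y => 2 * (h - V y) * A y l k') P
        = (-2 * pd r V P) * A P l k' + c * pd r (fun y => A y l k') P := by
    intro r l k'
    rw [pd_mul r hFd (hAd l k'), pd_F r hVd]
  have hinv : ((2 * (h - V P)) • A P)⁻¹ = c⁻¹ • (A P)⁻¹ := smul_matrix_inv c hc (A P) hdet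
  have hBB : ∀ k', ∑ l, (A P)⁻¹ i l * A P l k' = if i = k' then 1 else 0 := by
    intro k'
    rw [← Matrix.mul_apply, Matrix.nonsing_inv_mul _ hdet, Matrix.one_apply]
  rw [christoffel, christoffel]
  simp only [Matrix.smul_apply, smul_eq_mul, hpd, hinv]
  rw [← hBB k, ← hBB j]
  rw [Finset.mul_sum, Finset.mul_sum]
  have e1 : -2 * pd j V P * ∑ l : Fin m, (A P)⁻¹ i l * A P l k
      = ∑ l : Fin m, -2 * pd j V P * ((A P)⁻¹ i l * A P l k) := Finset.mul_sum _ _ _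
  have e2 : -2 * pd k V P * ∑ l : Fin m, (A P)⁻¹ i l * A P l j
      = ∑ l : Fin m, -2 * pd k V P * ((A P)⁻¹ i l * A P l j) := Finset.mul_sum _ _ _
  have e3 : (∑ l : Fin m, (A P)⁻¹ i l * (-2 * pd l V P)) * A P j k
      = ∑ l : Fin m, (A P)⁻¹ i l * (-2 * pd l V P) * A P j k := Finset.sum_mul _ _ _
  rw [e1, e2, e3, ← Finset.sum_add_distrib, ← Finset.sum_sub_distrib, Finset.mul_sum,
    ← Finset.sum_add_distrib]
  refine Finset.sum_congr rfl fun l _ => ?_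
  field_simp
  ring

/-- A curve of prescribed geodesic curvature for the Jacobi metric `m_h = 2(h−V)m`,
parametrized by `m_h`-arclength, becomes, after the reparametrization
`dt = dτ / (2(h−V))`, a motion of the mechanical system with gyroscopic forces
`(U, m, V, κ)` with total energy `h`. -/
theorem curvature_flow_to_motion {m : ℕ}
    (U : Set (Fin m → ℝ)) (hU : IsOpen U)
    (A : (Fin m → ℝ) → Matrix (Fin m) (Fin m) ℝ)
    (V : (Fin m → ℝ) → ℝ)
    (κ : (Fin m → ℝ) → Matrix (Fin m) (Fin m) ℝ)
    (hA : ∀ i j, ContDiffOn ℝ (⊤ : ℕ∞) (fun x => A x i j) U)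
    (hAsymm : ∀ x ∈ U, (A x).IsSymm)
    (hApos : ∀ x ∈ U, (A x).PosDef)
    (hV : ContDiffOn ℝ (⊤ : ℕ∞) V U)
    (hκ : ∀ i j, ContDiffOn ℝ (⊤ : ℕ∞) (fun x => κ x i j) U)
    (h : ℝ) (hh : ∀ x ∈ U, V x < h)
    (τ₀ τ₁ : ℝ) (q : ℝ → Fin m → ℝ)
    (hqU : ∀ τ ∈ Set.Ioo τ₀ τ₁, q τ ∈ U)
    (hq : ContDiffOn ℝ (⊤ : ℕ∞) q (Set.Ioo τ₀ τ₁))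
    -- the curvature equation of the Jacobi metric `m_h`:
    (hcurv : ∀ τ ∈ Set.Ioo τ₀ τ₁, ∀ i : Fin m,
      deriv (deriv q) τ i
        + ∑ j, ∑ k, christoffel (fun y => (2 * (h - V y)) • A y) (q τ) i j k
            * deriv q τ j * deriv q τ k
        = ∑ k, ∑ j, ((2 * (h - V (q τ))) • A (q τ))⁻¹ i k
            * (κ (q τ) k j - κ (q τ) j k) * deriv q τ j)
    -- parametrization by `m_h`-arclength:
    (harc : ∀ τ ∈ Set.Ioo τ₀ τ₁,
      2 * (h - V (q τ)) * ∑ i, ∑ j, A (q τ) i j * deriv q τ i * deriv q τ j = 1)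
    -- the strictly increasing solution of `dt/dτ = 1/(2(h − V(q(τ))))` and its inverse:
    (t : ℝ → ℝ)
    (ht : ∀ τ ∈ Set.Ioo τ₀ τ₁, HasDerivAt t (1 / (2 * (h - V (q τ)))) τ)
    (htmono : StrictMonoOn t (Set.Ioo τ₀ τ₁))
    (τinv : ℝ → ℝ)
    (hτinv : ∀ τ ∈ Set.Ioo τ₀ τ₁, τinv (t τ) = τ) :
    ∀ x : ℝ → Fin m → ℝ, x = (fun s => q (τinv s)) →
      ∀ s ∈ t '' Set.Ioo τ₀ τ₁,
        -- the equations of motion with gyroscopic forces: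
        (∀ i : Fin m,
          deriv (deriv x) s i
            + ∑ j, ∑ k, christoffel A (x s) i j k * deriv x s j * deriv x s k
            + ∑ j, (A (x s))⁻¹ i j * pd j V (x s)
            = ∑ k, ∑ j, (A (x s))⁻¹ i k * (κ (x s) k j - κ (x s) j k) * deriv x s j) ∧
        -- the total energy equals `h`:
        (1 / 2) * (∑ i, ∑ j, A (x s) i j * deriv x s i * deriv x s j) + V (x s) = h := by
  classical
  rintro x rfl s hs
  obtain ⟨τ, hτ, rfl⟩ := hs
  have hIoo : IsOpen (Set.Ioo τ₀ τ₁) := isOpen_Ioo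
  have hcpos : ∀ σ ∈ Set.Ioo τ₀ τ₁, 0 < 2 * (h - V (q σ)) := fun σ hσ => by
    have := hh _ (hqU σ hσ); linarith
  have tcont : ∀ σ ∈ Set.Ioo τ₀ τ₁, ContinuousAt t σ := fun σ hσ => (ht σ hσ).continuousAt
  have himg : ∀ a b : ℝ, τ₀ < a → b < τ₁ → a < b →
      Set.Ioo (t a) (t b) ⊆ t '' Set.Ioo a b := by
    intro a b ha hb hab
    have hsub : Set.Icc a b ⊆ Set.Ioo τ₀ τ₁ := fun y hy =>
      ⟨lt_of_lt_of_le ha hy.1, lt_of_le_of_lt hy.2 hb⟩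
    exact intermediate_value_Ioo (le_of_lt hab) fun y hy => (tcont y (hsub hy)).continuousWithinAt
  have hmem : ∀ σ ∈ Set.Ioo τ₀ τ₁, ∀ᶠ y in nhds (t σ), y ∈ t '' Set.Ioo τ₀ τ₁ := by
    intro σ hσ
    obtain ⟨a, ha0, haσ⟩ := exists_between hσ.1
    obtain ⟨b, hσb, hb1⟩ := exists_between hσ.2
    have haI : a ∈ Set.Ioo τ₀ τ₁ := ⟨ha0, haσ.trans hσ.2⟩
    have hbI : b ∈ Set.Ioo τ₀ τ₁ := ⟨hσ.1.trans hσb, hb1⟩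
    have hnb : Set.Ioo (t a) (t b) ∈ nhds (t σ) :=
      Ioo_mem_nhds (htmono haI hσ haσ) (htmono hσ hbI hσb)
    filter_upwards [hnb] with y hy
    obtain ⟨σ', hσ', rfl⟩ := himg a b ha0 hb1 (haσ.trans hσb) hy
    exact ⟨σ', ⟨ha0.trans hσ'.1, hσ'.2.trans hb1⟩, rfl⟩
  have hτcont : ∀ σ ∈ Set.Ioo τ₀ τ₁, ContinuousAt τinv (t σ) := by
    intro σ hσ
    rw [ContinuousAt, hτinv σ hσ, (nhds_basis_Ioo_pos σ).tendsto_right_iff]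
    intro ε hε
    have h1 : max τ₀ (σ - ε) < σ := max_lt hσ.1 (by linarith)
    have h2 : σ < min τ₁ (σ + ε) := lt_min hσ.2 (by linarith)
    obtain ⟨a, ha0, haσ⟩ := exists_between h1
    obtain ⟨b, hσb, hb1⟩ := exists_between h2
    have ha0' : τ₀ < a := lt_of_le_of_lt (le_max_left _ _) ha0
    have haε : σ - ε < a := lt_of_le_of_lt (le_max_right _ _) ha0
    have hb1' : b < τ₁ := lt_of_lt_of_le hb1 (min_le_left _ _)
    have hbε : b < σ + ε := lt_of_lt_of_le hb1 (min_le_right _ _)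
    have haI : a ∈ Set.Ioo τ₀ τ₁ := ⟨ha0', haσ.trans hσ.2⟩
    have hbI : b ∈ Set.Ioo τ₀ τ₁ := ⟨hσ.1.trans hσb, hb1'⟩
    have hnb : Set.Ioo (t a) (t b) ∈ nhds (t σ) :=
      Ioo_mem_nhds (htmono haI hσ haσ) (htmono hσ hbI hσb)
    filter_upwards [hnb] with y hy
    obtain ⟨σ', hσ', rfl⟩ := himg a b ha0' hb1' (haσ.trans hσb) hy
    have hσ'I : σ' ∈ Set.Ioo τ₀ τ₁ := ⟨ha0'.trans hσ'.1, hσ'.2.trans hb1'⟩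
    rw [hτinv σ' hσ'I]
    exact ⟨by linarith [hσ'.1], by linarith [hσ'.2]⟩
  have hτd : ∀ σ ∈ Set.Ioo τ₀ τ₁, HasDerivAt τinv (2 * (h - V (q σ))) (t σ) := by
    intro σ hσ
    have h0 : τinv (t σ) = σ := hτinv σ hσ
    have hf : HasDerivAt t (1 / (2 * (h - V (q σ)))) (τinv (t σ)) := by
      rw [h0]; exact ht σ hσ
    have hf' : 1 / (2 * (h - V (q σ))) ≠ 0 := by
      have := hcpos σ hσ; positivity
    have hfg : ∀ᶠ y in nhds (t σ), t (τinv y) = y := by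
      filter_upwards [hmem σ hσ] with y hy
      obtain ⟨σ', hσ', rfl⟩ := hy
      rw [hτinv σ' hσ']
    have h2 := HasDerivAt.of_local_left_inverse (hτcont σ hσ) hf hf' hfg
    rwa [one_div, inv_inv] at h2
  have hq1 : ContDiffOn ℝ (⊤ : ℕ∞) (deriv q) (Set.Ioo τ₀ τ₁) := hq.deriv_of_isOpen hIoo (by simp)
  have hqd : ∀ σ ∈ Set.Ioo τ₀ τ₁, HasDerivAt q (deriv q σ) σ := fun σ hσ =>
    ((hq.contDiffAt (hIoo.mem_nhds hσ)).differentiableAt (by simp)).hasDerivAt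
  have hqd2 : HasDerivAt (deriv q) (deriv (deriv q) τ) τ :=
    ((hq1.contDiffAt (hIoo.mem_nhds hτ)).differentiableAt (by simp)).hasDerivAt
  have hxder : ∀ σ ∈ Set.Ioo τ₀ τ₁,
      HasDerivAt (fun s' => q (τinv s')) ((2 * (h - V (q σ))) • deriv q σ) (t σ) := by
    intro σ hσ
    have h1 : HasDerivAt q (deriv q σ) (τinv (t σ)) := by rw [hτinv σ hσ]; exact hqd σ hσ
    have := h1.scomp (t σ) (hτd σ hσ)
    simpa [Function.comp_def] using this
  have hx1 : deriv (fun s' => q (τinv s')) (t τ) = (2 * (h - V (q τ))) • deriv q τ :=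
    (hxder τ hτ).deriv
  have hPU : q τ ∈ U := hqU τ hτ
  have hVd : DifferentiableAt ℝ V (q τ) :=
    (hV.contDiffAt (hU.mem_nhds hPU)).differentiableAt (by simp)
  have hAd : ∀ l k, DifferentiableAt ℝ (fun y => A y l k) (q τ) := fun l k =>
    ((hA l k).contDiffAt (hU.mem_nhds hPU)).differentiableAt (by simp)
  have hFd : DifferentiableAt ℝ (fun y => 2 * (h - V y)) (q τ) := (hVd.const_sub h).const_mul 2
  have hFq : HasDerivAt (fun σ => 2 * (h - V (q σ)))
      (∑ l, deriv q τ l * pd l (fun y => 2 * (h - V y)) (q τ)) τ :=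
    hasDerivAt_comp_pd hFd (hqd τ hτ)
  have hdF : (∑ l, deriv q τ l * pd l (fun y => 2 * (h - V y)) (q τ))
      = -2 * ∑ l, pd l V (q τ) * deriv q τ l := by
    rw [Finset.mul_sum]
    refine Finset.sum_congr rfl fun l _ => ?_
    rw [pd_F l hVd]; ring
  rw [hdF] at hFq
  have hwd : HasDerivAt (fun s' i => 2 * (h - V (q (τinv s'))) * deriv q (τinv s') i)
      (fun i => ((-2 * ∑ l, pd l V (q τ) * deriv q τ l) * deriv q τ i
          + 2 * (h - V (q τ)) * deriv (deriv q) τ i) * (2 * (h - V (q τ)))) (t τ) := by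
    rw [hasDerivAt_pi]
    intro i
    have hqi : HasDerivAt (fun σ => deriv q σ i) (deriv (deriv q) τ i) τ :=
      (hasDerivAt_pi.1 hqd2) i
    have hψ : HasDerivAt (fun σ => 2 * (h - V (q σ)) * deriv q σ i)
        ((-2 * ∑ l, pd l V (q τ) * deriv q τ l) * deriv q τ i
          + 2 * (h - V (q τ)) * deriv (deriv q) τ i) (τinv (t τ)) := by
      rw [hτinv τ hτ]; exact hFq.mul hqi
    have := hψ.comp (t τ) (hτd τ hτ)
    simpa [Function.comp_def] using this
  have hev : deriv (fun s' => q (τinv s'))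
      =ᶠ[nhds (t τ)] fun s' i => 2 * (h - V (q (τinv s'))) * deriv q (τinv s') i := by
    filter_upwards [hmem τ hτ] with y hy
    obtain ⟨σ, hσ, rfl⟩ := hy
    rw [(hxder σ hσ).deriv, hτinv σ hσ]
    funext i
    simp
  have hDD : deriv (deriv (fun s' => q (τinv s'))) (t τ)
      = fun i => ((-2 * ∑ l, pd l V (q τ) * deriv q τ l) * deriv q τ i
          + 2 * (h - V (q τ)) * deriv (deriv q) τ i) * (2 * (h - V (q τ))) :=
    hev.deriv_eq.trans hwd.deriv
  have hc0 : (2 * (h - V (q τ))) ≠ 0 := ne_of_gt (hcpos τ hτ)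
  have hdet : IsUnit (A (q τ)).det := isUnit_iff_ne_zero.mpr (ne_of_gt (hApos _ hPU).det_pos)
  have hKi : ((2 * (h - V (q τ))) • A (q τ))⁻¹ = (2 * (h - V (q τ)))⁻¹ • (A (q τ))⁻¹ :=
    smul_matrix_inv _ hc0 _ hdet
  have harcτ := harc τ hτ
  have hinv0 : 2 * (h - V (q τ)) * (2 * (h - V (q τ)))⁻¹ = 1 := mul_inv_cancel₀ hc0
  have hx0 : q (τinv (t τ)) = q τ := by rw [hτinv τ hτ]
  refine ⟨fun i => ?_, ?_⟩
  · -- the equations of motion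
    have hT : (∑ l, (A (q τ))⁻¹ i l * (-2 * pd l V (q τ)))
        = -2 * ∑ l, (A (q τ))⁻¹ i l * pd l V (q τ) := by
      rw [Finset.mul_sum]; exact Finset.sum_congr rfl fun l _ => by ring
    have hG := fun j k => christoffel_conformal A V h (q τ) hAd hVd hdet hc0 i j k
    have hinner : (∑ k, (if i = k then (1:ℝ) else 0) * deriv q τ k) = deriv q τ i := by
      simp [ite_mul]
    have h1 : ∑ j, ∑ k, (1 / (2 * (2 * (h - V (q τ))))) *
          (((-2 * pd j V (q τ)) * deriv q τ j) * ((if i = k then (1:ℝ) else 0) * deriv q τ k))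
        = (1 / (2 * (2 * (h - V (q τ))))) *
          (-2 * (∑ l, pd l V (q τ) * deriv q τ l) * deriv q τ i) := by
      calc ∑ j, ∑ k, (1 / (2 * (2 * (h - V (q τ))))) *
            (((-2 * pd j V (q τ)) * deriv q τ j) * ((if i = k then (1:ℝ) else 0) * deriv q τ k))
          = ∑ j, (1 / (2 * (2 * (h - V (q τ))))) *
            (((-2 * pd j V (q τ)) * deriv q τ j) * deriv q τ i) := by
            refine Finset.sum_congr rfl fun j _ => ?_
            rw [← Finset.mul_sum, ← Finset.mul_sum, hinner]
        _ = (1 / (2 * (2 * (h - V (q τ))))) *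
            (∑ j, ((-2 * pd j V (q τ)) * deriv q τ j) * deriv q τ i) := by
            rw [← Finset.mul_sum]
        _ = (1 / (2 * (2 * (h - V (q τ))))) *
            (-2 * (∑ l, pd l V (q τ) * deriv q τ l) * deriv q τ i) := by
            congr 1
            rw [Finset.mul_sum, Finset.sum_mul]
            exact Finset.sum_congr rfl fun l _ => by ring
    have h2 : ∑ j, ∑ k, (1 / (2 * (2 * (h - V (q τ))))) *
          (((if i = j then (1:ℝ) else 0) * deriv q τ j) * ((-2 * pd k V (q τ)) * deriv q τ k))
        = (1 / (2 * (2 * (h - V (q τ))))) *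
          (-2 * (∑ l, pd l V (q τ) * deriv q τ l) * deriv q τ i) := by
      calc ∑ j, ∑ k, (1 / (2 * (2 * (h - V (q τ))))) *
            (((if i = j then (1:ℝ) else 0) * deriv q τ j) * ((-2 * pd k V (q τ)) * deriv q τ k))
          = ∑ j, (1 / (2 * (2 * (h - V (q τ))))) *
            (((if i = j then (1:ℝ) else 0) * deriv q τ j) *
              (∑ k, (-2 * pd k V (q τ)) * deriv q τ k)) := by
            refine Finset.sum_congr rfl fun j _ => ?_
            rw [← Finset.mul_sum, ← Finset.mul_sum]
        _ = (1 / (2 * (2 * (h - V (q τ))))) *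
            (∑ j, ((if i = j then (1:ℝ) else 0) * deriv q τ j) *
              (∑ k, (-2 * pd k V (q τ)) * deriv q τ k)) := by
            rw [← Finset.mul_sum]
        _ = (1 / (2 * (2 * (h - V (q τ))))) *
            (-2 * (∑ l, pd l V (q τ) * deriv q τ l) * deriv q τ i) := by
            congr 1
            have : ∑ j, ((if i = j then (1:ℝ) else 0) * deriv q τ j) *
                (∑ k, (-2 * pd k V (q τ)) * deriv q τ k)
                = deriv q τ i * (∑ k, (-2 * pd k V (q τ)) * deriv q τ k) := by
              simp [ite_mul]
            rw [this, Finset.mul_sum, Finset.mul_sum, Finset.sum_mul]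
            exact Finset.sum_congr rfl fun l _ => by ring
    have h3 : ∑ j, ∑ k, (1 / (2 * (2 * (h - V (q τ))))) *
          ((2 * (∑ l, (A (q τ))⁻¹ i l * pd l V (q τ)))
            * (A (q τ) j k * deriv q τ j * deriv q τ k))
        = (1 / (2 * (2 * (h - V (q τ))))) *
          (2 * (∑ l, (A (q τ))⁻¹ i l * pd l V (q τ))
            * ∑ j, ∑ k, A (q τ) j k * deriv q τ j * deriv q τ k) := by
      simp only [← Finset.mul_sum]
    have hGsum : ∑ j, ∑ k, christoffel (fun y => (2 * (h - V y)) • A y) (q τ) i j k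
          * deriv q τ j * deriv q τ k
        = (∑ j, ∑ k, christoffel A (q τ) i j k * deriv q τ j * deriv q τ k)
          + (1 / (2 * (2 * (h - V (q τ))))) *
            (-2 * (∑ l, pd l V (q τ) * deriv q τ l) * deriv q τ i
             + -2 * (∑ l, pd l V (q τ) * deriv q τ l) * deriv q τ i
             + 2 * (∑ l, (A (q τ))⁻¹ i l * pd l V (q τ))
                 * ∑ j, ∑ k, A (q τ) j k * deriv q τ j * deriv q τ k) := by
      have step1 : ∀ j k, christoffel (fun y => (2 * (h - V y)) • A y) (q τ) i j k
            * deriv q τ j * deriv q τ k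
          = christoffel A (q τ) i j k * deriv q τ j * deriv q τ k
            + (1 / (2 * (2 * (h - V (q τ))))) *
              (((-2 * pd j V (q τ)) * deriv q τ j) * ((if i = k then (1:ℝ) else 0) * deriv q τ k))
            + (1 / (2 * (2 * (h - V (q τ))))) *
              (((if i = j then (1:ℝ) else 0) * deriv q τ j) * ((-2 * pd k V (q τ)) * deriv q τ k))
            + (1 / (2 * (2 * (h - V (q τ))))) *
              ((2 * (∑ l, (A (q τ))⁻¹ i l * pd l V (q τ)))
                * (A (q τ) j k * deriv q τ j * deriv q τ k)) := by
        intro j k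
        rw [hG j k, hT]; ring
      simp only [step1, Finset.sum_add_distrib]
      rw [h1, h2, h3]
      ring
    have hKsum : ∑ k, ∑ j, ((2 * (h - V (q τ))) • A (q τ))⁻¹ i k
          * (κ (q τ) k j - κ (q τ) j k) * deriv q τ j
        = (2 * (h - V (q τ)))⁻¹ * ∑ k, ∑ j, (A (q τ))⁻¹ i k
          * (κ (q τ) k j - κ (q τ) j k) * deriv q τ j := by
      rw [Finset.mul_sum]
      refine Finset.sum_congr rfl fun k _ => ?_
      rw [Finset.mul_sum]
      refine Finset.sum_congr rfl fun j _ => ?_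
      rw [hKi]
      simp only [Matrix.smul_apply, smul_eq_mul]
      ring
    have hc1 := hcurv τ hτ i
    rw [hGsum, hKsum] at hc1
    simp only [hDD, hx1, hx0, Pi.smul_apply, smul_eq_mul]
    have hg1 : ∑ j, ∑ k, christoffel A (q τ) i j k * (2 * (h - V (q τ)) * deriv q τ j)
          * (2 * (h - V (q τ)) * deriv q τ k)
        = (2 * (h - V (q τ)))^2
          * ∑ j, ∑ k, christoffel A (q τ) i j k * deriv q τ j * deriv q τ k := by
      rw [Finset.mul_sum]
      refine Finset.sum_congr rfl fun j _ => ?_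
      rw [Finset.mul_sum]
      exact Finset.sum_congr rfl fun k _ => by ring
    have hg2 : ∑ k, ∑ j, (A (q τ))⁻¹ i k * (κ (q τ) k j - κ (q τ) j k)
          * (2 * (h - V (q τ)) * deriv q τ j)
        = (2 * (h - V (q τ)))
          * ∑ k, ∑ j, (A (q τ))⁻¹ i k * (κ (q τ) k j - κ (q τ) j k) * deriv q τ j := by
      rw [Finset.mul_sum]
      refine Finset.sum_congr rfl fun k _ => ?_
      rw [Finset.mul_sum]
      exact Finset.sum_congr rfl fun j _ => by ring
    rw [hg1, hg2]
    have e4 : (1 : ℝ) / (2 * (2 * (h - V (q τ)))) = (2 * (h - V (q τ)))⁻¹ / 2 := by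
      rw [one_div, mul_inv]
      ring
    rw [e4] at hc1
    linear_combination (2 * (h - V (q τ)))^2 * hc1
      + (2 * (∑ l, pd l V (q τ) * deriv q τ l) * deriv q τ i * (2 * (h - V (q τ)))
         + (2 * (h - V (q τ))) * (∑ k, ∑ j, (A (q τ))⁻¹ i k
              * (κ (q τ) k j - κ (q τ) j k) * deriv q τ j)
         - (2 * (h - V (q τ))) * (∑ l, (A (q τ))⁻¹ i l * pd l V (q τ))
              * (∑ j, ∑ k, A (q τ) j k * deriv q τ j * deriv q τ k)) * hinv0
      - (∑ l, (A (q τ))⁻¹ i l * pd l V (q τ)) * harcτ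
  · -- the energy
    simp only [hx1, hx0, Pi.smul_apply, smul_eq_mul]
    have hsumE : ∑ i, ∑ j, A (q τ) i j * (2 * (h - V (q τ)) * deriv q τ i)
          * (2 * (h - V (q τ)) * deriv q τ j)
        = (2 * (h - V (q τ)))^2 * ∑ i, ∑ j, A (q τ) i j * deriv q τ i * deriv q τ j := by
      rw [Finset.mul_sum]
      refine Finset.sum_congr rfl fun a _ => ?_
      rw [Finset.mul_sum]
      exact Finset.sum_congr rfl fun b _ => by ring
    rw [hsumE]
    linear_combination (h - V (q τ)) * harcτ
end

section
/- Suppose a smooth curve x : (t₀, t₁) → U satisfies the equations of motion with gyroscopic forces, ẍⁱ + Σ_{j,k} Γⁱ_{jk}(x) ẋʲ ẋᵏ + Σ_j a^{ij}(x) (∂V/∂xʲ)(x) = Σ_{k,j} a^{ik}(x) κ̄_{kj}(x) ẋʲ, and has total energy h: ½ Σ_{i,j} a_{ij}(x(t)) ẋⁱ ẋʲ + V(x(t)) = h for all t. Let τ(t) be the strictly increasing solution of dτ/dt = 2(h − V(x(t))) and t(τ) its inverse. Then the reparametrized curve q(τ) = x(t(τ)) is parametrized by m_h-arclength, i.e.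 2(h − V(q(τ))) Σ_{i,j} a_{ij}(q(τ)) q′ⁱ q′ʲ = 1, and satisfies the curvature equation q″ⁱ + Σ_{j,k} Γ̄ⁱ_{jk}(q) q′ʲ q′ᵏ = Σ_{k,j} ā^{ik}(q) κ̄_{kj}(q) q′ʲ. -/
open scoped BigOperators

private lemma contract_aux {m : ℕ} (B M : Matrix (Fin m) (Fin m) ℝ) (hBM : B * M = 1)
    (i : Fin m) (v : Fin m → ℝ) : (∑ k, (∑ l, B i l * M l k) * v k) = v i := by
  have h1 : ∀ k, (∑ l, B i l * M l k) = (1 : Matrix (Fin m) (Fin m) ℝ) i k := by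
    intro k; rw [← hBM, Matrix.mul_apply]
  simp only [h1, Matrix.one_apply]
  simp [Finset.sum_ite_eq]

/-- A motion of the mechanical system with gyroscopic forces `(U, m, V, κ)` with total
energy `h`, reparametrized by the arclength of the Jacobi metric `m_h = 2(h−V)m` via
`dτ/dt = 2(h−V)`, is a curve of prescribed geodesic curvature for `m_h`, parametrized by
`m_h`-arclength. -/
theorem motion_to_curvature_flow {m : ℕ}
    (U : Set (Fin m → ℝ)) (hU : IsOpen U)
    (A : (Fin m → ℝ) → Matrix (Fin m) (Fin m) ℝ)
    (V : (Fin m → ℝ) → ℝ)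
    (κ : (Fin m → ℝ) → Matrix (Fin m) (Fin m) ℝ)
    (hA : ∀ i j, ContDiffOn ℝ (⊤ : ℕ∞) (fun x => A x i j) U)
    (hAsymm : ∀ x ∈ U, (A x).IsSymm)
    (hApos : ∀ x ∈ U, (A x).PosDef)
    (hV : ContDiffOn ℝ (⊤ : ℕ∞) V U)
    (hκ : ∀ i j, ContDiffOn ℝ (⊤ : ℕ∞) (fun x => κ x i j) U)
    (h : ℝ) (hh : ∀ x ∈ U, V x < h)
    (t₀ t₁ : ℝ) (x : ℝ → Fin m → ℝ)
    (hxU : ∀ t ∈ Set.Ioo t₀ t₁, x t ∈ U)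
    (hx : ContDiffOn ℝ (⊤ : ℕ∞) x (Set.Ioo t₀ t₁))
    -- the equations of motion with gyroscopic forces:
    (hmotion : ∀ t ∈ Set.Ioo t₀ t₁, ∀ i : Fin m,
      deriv (deriv x) t i
        + ∑ j, ∑ k, christoffel A (x t) i j k * deriv x t j * deriv x t k
        + ∑ j, (A (x t))⁻¹ i j * pd j V (x t)
        = ∑ k, ∑ j, (A (x t))⁻¹ i k * (κ (x t) k j - κ (x t) j k) * deriv x t j)
    -- the total energy equals `h`:
    (henergy : ∀ t ∈ Set.Ioo t₀ t₁,
      (1 / 2) * (∑ i, ∑ j, A (x t) i j * deriv x t i * deriv x t j) + V (x t) = h)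
    -- the strictly increasing solution of `dτ/dt = 2(h − V(x(t)))` and its inverse:
    (τ : ℝ → ℝ)
    (hτ : ∀ t ∈ Set.Ioo t₀ t₁, HasDerivAt τ (2 * (h - V (x t))) t)
    (hτmono : StrictMonoOn τ (Set.Ioo t₀ t₁))
    (tinv : ℝ → ℝ)
    (htinv : ∀ t ∈ Set.Ioo t₀ t₁, tinv (τ t) = t) :
    ∀ q : ℝ → Fin m → ℝ, q = (fun s => x (tinv s)) →
      ∀ s ∈ τ '' Set.Ioo t₀ t₁,
        -- parametrization by `m_h`-arclength:
        (2 * (h - V (q s)) * ∑ i, ∑ j, A (q s) i j * deriv q s i * deriv q s j = 1) ∧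
        -- the curvature equation of the Jacobi metric `m_h`:
        (∀ i : Fin m,
          deriv (deriv q) s i
            + ∑ j, ∑ k, christoffel (fun y => (2 * (h - V y)) • A y) (q s) i j k
                * deriv q s j * deriv q s k
            = ∑ k, ∑ j, ((2 * (h - V (q s))) • A (q s))⁻¹ i k
                * (κ (q s) k j - κ (q s) j k) * deriv q s j) := by
  intro q hq
  subst hq
  rintro s ⟨t, ht, rfl⟩
  -- basic differentiability facts
  have hVdiff : ∀ y ∈ U, DifferentiableAt ℝ V y := fun y hy =>
    (hV.contDiffAt (hU.mem_nhds hy)).differentiableAt (by simp)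
  have hAdiff : ∀ (l k : Fin m), ∀ y ∈ U, DifferentiableAt ℝ (fun z => A z l k) y :=
    fun l k y hy => ((hA l k).contDiffAt (hU.mem_nhds hy)).differentiableAt (by simp)
  have hxdiff : ∀ u ∈ Set.Ioo t₀ t₁, HasDerivAt x (deriv x u) u := fun u hu =>
    ((hx.contDiffAt (isOpen_Ioo.mem_nhds hu)).differentiableAt (by simp)).hasDerivAt
  have hxdiff2 : ∀ u ∈ Set.Ioo t₀ t₁, HasDerivAt (deriv x) (deriv (deriv x) u) u := fun u hu =>
    (((hx.deriv_of_isOpen (m := (⊤ : ℕ∞)) isOpen_Ioo (by simp)).contDiffAt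
      (isOpen_Ioo.mem_nhds hu)).differentiableAt (by simp)).hasDerivAt
  have hcpos : ∀ u ∈ Set.Ioo t₀ t₁, 0 < 2 * (h - V (x u)) := fun u hu => by
    have := hh _ (hxU u hu); linarith
  -- local structure of τ near a point of the interval
  have hloc : ∀ u ∈ Set.Ioo t₀ t₁, ∃ δ > 0, Set.Icc (u - δ) (u + δ) ⊆ Set.Ioo t₀ t₁ ∧
      ∀ y ∈ Set.Ioo (τ (u - δ)) (τ (u + δ)), ∃ z ∈ Set.Ioo (u - δ) (u + δ), τ z = y := by
    intro u hu
    obtain ⟨ε, hε0, hε⟩ := Metric.isOpen_iff.1 isOpen_Ioo u hu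
    refine ⟨ε / 2, by linarith, ?_, ?_⟩
    · intro y hy
      apply hε
      rw [Metric.mem_ball, Real.dist_eq, abs_lt]
      rcases hy with ⟨h1, h2⟩
      constructor <;> linarith
    · intro y hy
      have hsub : Set.Icc (u - ε / 2) (u + ε / 2) ⊆ Set.Ioo t₀ t₁ := by
        intro z hz
        apply hε
        rw [Metric.mem_ball, Real.dist_eq, abs_lt]
        rcases hz with ⟨h1, h2⟩
        constructor <;> linarith
      have hc : ContinuousOn τ (Set.Icc (u - ε / 2) (u + ε / 2)) := fun z hz =>
        ((hτ z (hsub hz)).continuousAt).continuousWithinAt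
      exact intermediate_value_Ioo (by linarith) hc hy
  -- the key parametrization fact
  have hparam : ∀ u ∈ Set.Ioo t₀ t₁,
      HasDerivAt tinv (2 * (h - V (x u)))⁻¹ (τ u) ∧
      HasDerivAt (fun y => x (tinv y)) ((2 * (h - V (x u)))⁻¹ • deriv x u) (τ u) := by
    intro u hu
    obtain ⟨δ, hδ0, hδsub, hδsurj⟩ := hloc u hu
    have hm1 : u - δ ∈ Set.Ioo t₀ t₁ := hδsub ⟨le_refl _, by linarith⟩
    have hm2 : u + δ ∈ Set.Ioo t₀ t₁ := hδsub ⟨by linarith, le_refl _⟩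
    have hτ1 : τ (u - δ) < τ u := hτmono hm1 hu (by linarith)
    have hτ2 : τ u < τ (u + δ) := hτmono hu hm2 (by linarith)
    have hfg : ∀ᶠ y in nhds (τ u), τ (tinv y) = y := by
      filter_upwards [Ioo_mem_nhds hτ1 hτ2] with y hy
      obtain ⟨z, hz, rfl⟩ := hδsurj y hy
      rw [htinv z (hδsub ⟨hz.1.le, hz.2.le⟩)]
    have hcont : ContinuousAt tinv (τ u) := by
      have key : Filter.Tendsto tinv (nhds (τ u)) (nhds u) := by
        rw [tendsto_order]
        constructor
        · intro b hb
          have hb'1 : max b (u - δ) < u := max_lt hb (by linarith)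
          have hb'mem : max b (u - δ) ∈ Set.Ioo t₀ t₁ :=
            hδsub ⟨le_max_right _ _, by have := le_of_lt hb'1; linarith⟩
          have hτb' : τ (max b (u - δ)) < τ u := hτmono hb'mem hu hb'1
          filter_upwards [Ioo_mem_nhds hτb' hτ2, Ioo_mem_nhds hτ1 hτ2] with y hy1 hy2
          obtain ⟨z, hz, rfl⟩ := hδsurj y hy2
          have hzmem : z ∈ Set.Ioo t₀ t₁ := hδsub ⟨hz.1.le, hz.2.le⟩
          rw [htinv z hzmem]
          by_contra hcon
          push_neg at hcon
          have : τ z ≤ τ (max b (u - δ)) :=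
            hτmono.monotoneOn hzmem hb'mem (le_trans hcon (le_max_left _ _))
          exact absurd hy1.1 (not_lt.2 this)
        · intro b hb
          have hb'1 : u < min b (u + δ) := lt_min hb (by linarith)
          have hb'mem : min b (u + δ) ∈ Set.Ioo t₀ t₁ :=
            hδsub ⟨by have := le_of_lt hb'1; linarith, min_le_right _ _⟩
          have hτb' : τ u < τ (min b (u + δ)) := hτmono hu hb'mem hb'1
          filter_upwards [Ioo_mem_nhds hτ1 hτb', Ioo_mem_nhds hτ1 hτ2] with y hy1 hy2
          obtain ⟨z, hz, rfl⟩ := hδsurj y hy2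
          have hzmem : z ∈ Set.Ioo t₀ t₁ := hδsub ⟨hz.1.le, hz.2.le⟩
          rw [htinv z hzmem]
          by_contra hcon
          push_neg at hcon
          have : τ (min b (u + δ)) ≤ τ z :=
            hτmono.monotoneOn hb'mem hzmem (le_trans (min_le_left _ _) hcon)
          exact absurd hy1.2 (not_lt.2 this)
      unfold ContinuousAt
      rwa [htinv u hu]
    have hdtinv : HasDerivAt tinv (2 * (h - V (x u)))⁻¹ (τ u) :=
      HasDerivAt.of_local_left_inverse hcont
        (by rw [htinv u hu]; exact hτ u hu) (hcpos u hu).ne' hfg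
    refine ⟨hdtinv, ?_⟩
    have hxu : HasDerivAt x (deriv x u) (tinv (τ u)) := by
      rw [htinv u hu]; exact hxdiff u hu
    simpa [Function.comp_def] using HasDerivAt.scomp (𝕜 := ℝ) (𝕜' := ℝ) (τ u) hxu hdtinv
  -- image of τ is a neighborhood
  have himg : ∀ u ∈ Set.Ioo t₀ t₁,
      ∀ᶠ y in nhds (τ u), ∃ z ∈ Set.Ioo t₀ t₁, τ z = y := by
    intro u hu
    obtain ⟨δ, hδ0, hδsub, hδsurj⟩ := hloc u hu
    have hm1 : u - δ ∈ Set.Ioo t₀ t₁ := hδsub ⟨le_refl _, by linarith⟩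
    have hm2 : u + δ ∈ Set.Ioo t₀ t₁ := hδsub ⟨by linarith, le_refl _⟩
    have hτ1 : τ (u - δ) < τ u := hτmono hm1 hu (by linarith)
    have hτ2 : τ u < τ (u + δ) := hτmono hu hm2 (by linarith)
    filter_upwards [Ioo_mem_nhds hτ1 hτ2] with y hy
    obtain ⟨z, hz, hzy⟩ := hδsurj y hy
    exact ⟨z, hδsub ⟨hz.1.le, hz.2.le⟩, hzy⟩

  -- facts at the point t
  have htU : x t ∈ U := hxU t ht
  have hne : (2 * (h - V (x t))) ≠ 0 := (hcpos t ht).ne'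
  have hdq : deriv (fun y => x (tinv y)) (τ t) = (2 * (h - V (x t)))⁻¹ • deriv x t :=
    ((hparam t ht).2).deriv
  have hev : deriv (fun y => x (tinv y)) =ᶠ[nhds (τ t)]
      fun y => (2 * (h - V (x (tinv y))))⁻¹ • deriv x (tinv y) := by
    filter_upwards [himg t ht] with y hy
    obtain ⟨z, hz, rfl⟩ := hy
    rw [((hparam z hz).2).deriv, htinv z hz]
  have hVfd : HasFDerivAt V (fderiv ℝ V (x t)) (x t) := (hVdiff _ htU).hasFDerivAt
  have hVx : HasDerivAt (fun u => V (x u)) (fderiv ℝ V (x t) (deriv x t)) t := by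
    simpa [Function.comp_def] using hVfd.comp_hasDerivAt t (hxdiff t ht)
  have hcd : HasDerivAt (fun u => 2 * (h - V (x u)))
      (2 * -(fderiv ℝ V (x t) (deriv x t))) t := (hVx.const_sub h).const_mul 2
  have hinvd : HasDerivAt (fun u => (2 * (h - V (x u)))⁻¹)
      (-(2 * -(fderiv ℝ V (x t) (deriv x t))) / (2 * (h - V (x t))) ^ 2) t := hcd.inv hne
  have hG : HasDerivAt (fun u => (2 * (h - V (x u)))⁻¹ • deriv x u)
      ((2 * (h - V (x t)))⁻¹ • deriv (deriv x) t
        + (-(2 * -(fderiv ℝ V (x t) (deriv x t))) / (2 * (h - V (x t))) ^ 2) • deriv x t) t :=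
    hinvd.smul (hxdiff2 t ht)
  have hGq : HasDerivAt (deriv (fun y => x (tinv y)))
      ((2 * (h - V (x t)))⁻¹ • ((2 * (h - V (x t)))⁻¹ • deriv (deriv x) t
        + (-(2 * -(fderiv ℝ V (x t) (deriv x t))) / (2 * (h - V (x t))) ^ 2) • deriv x t))
      (τ t) := by
    have hG' : HasDerivAt (fun u => (2 * (h - V (x u)))⁻¹ • deriv x u)
        ((2 * (h - V (x t)))⁻¹ • deriv (deriv x) t
          + (-(2 * -(fderiv ℝ V (x t) (deriv x t))) / (2 * (h - V (x t))) ^ 2) • deriv x t)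
        (tinv (τ t)) := by
      rw [htinv t ht]; exact hG
    have h1 := HasDerivAt.scomp (𝕜 := ℝ) (𝕜' := ℝ) (τ t) hG' (hparam t ht).1
    have h2 : HasDerivAt (fun y => (2 * (h - V (x (tinv y))))⁻¹ • deriv x (tinv y))
        ((2 * (h - V (x t)))⁻¹ • ((2 * (h - V (x t)))⁻¹ • deriv (deriv x) t
          + (-(2 * -(fderiv ℝ V (x t) (deriv x t))) / (2 * (h - V (x t))) ^ 2) • deriv x t))
        (τ t) := by simpa [Function.comp_def] using h1
    exact h2.congr_of_eventuallyEq hev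
  have hddq := hGq.deriv
  have hS : fderiv ℝ V (x t) (deriv x t) = ∑ j, pd j V (x t) * deriv x t j := by
    conv_lhs => rw [pi_eq_sum_univ (deriv x t)]
    rw [map_sum]
    refine Finset.sum_congr rfl fun j _ => ?_
    rw [map_smul]
    have hfj : (fun j' => if j = j' then (1:ℝ) else 0) = Pi.single j 1 := by
      funext k; simp [Pi.single_apply, eq_comm]
    rw [hfj]
    simp [pd, mul_comm]
  have hE : (∑ i, ∑ j, A (x t) i j * deriv x t i * deriv x t j) = 2 * (h - V (x t)) := by
    have := henergy t ht; linarith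
  have hdet : IsUnit (A (x t)).det := (Matrix.PosDef.det_pos (hApos _ htU)).ne'.isUnit
  have hBA : (A (x t))⁻¹ * A (x t) = 1 := Matrix.nonsing_inv_mul _ hdet
  have hcinv : ((2 * (h - V (x t))) • A (x t))⁻¹ = (2 * (h - V (x t)))⁻¹ • (A (x t))⁻¹ := by
    apply Matrix.inv_eq_right_inv
    rw [Matrix.smul_mul, Matrix.mul_smul, smul_smul, mul_inv_cancel₀ hne, one_smul,
      Matrix.mul_nonsing_inv _ hdet]
  have hpdbar : ∀ (j l k : Fin m), pd j (fun y => ((2 * (h - V y)) • A y) l k) (x t)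
      = 2 * -(pd j V (x t)) * A (x t) l k
        + (2 * (h - V (x t))) * pd j (fun y => A y l k) (x t) := by
    intro j l k
    have hA' : HasFDerivAt (fun y => A y l k) (fderiv ℝ (fun y => A y l k) (x t)) (x t) :=
      (hAdiff l k _ htU).hasFDerivAt
    have hmul := ((hVfd.const_sub h).const_mul (2:ℝ)).mul hA'
    have hfun : (fun y => ((2 * (h - V y)) • A y) l k)
        = fun y => (2 * (h - V y)) * A y l k := by funext y; simp
    simp only [pd, hfun]
    rw [(show HasFDerivAt (fun y => 2 * (h - V y) * A y l k) _ (x t) from hmul).fderiv]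
    simp only [ContinuousLinearMap.add_apply, ContinuousLinearMap.smul_apply,
      ContinuousLinearMap.neg_apply, smul_eq_mul]
    ring
  have hchrsplit : ∀ i j k, christoffel (fun y => (2 * (h - V y)) • A y) (x t) i j k
      = christoffel A (x t) i j k + (2 * (h - V (x t)))⁻¹ * ∑ l, (A (x t))⁻¹ i l *
          (pd l V (x t) * A (x t) j k - pd j V (x t) * A (x t) l k
            - pd k V (x t) * A (x t) l j) := by
    intro i j k
    simp only [christoffel]
    simp only [hpdbar]
    simp only [hcinv, Matrix.smul_apply, smul_eq_mul]
    rw [Finset.mul_sum, Finset.mul_sum, Finset.mul_sum, ← Finset.sum_add_distrib]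
    refine Finset.sum_congr rfl fun l _ => ?_
    linear_combination (1 / 2 * (A (x t))⁻¹ i l *
      (pd j (fun y => A y l k) (x t) + pd k (fun y => A y l j) (x t)
        - pd l (fun y => A y j k) (x t))) * (mul_inv_cancel₀ hne)
  have hq0 : (fun s => x (tinv s)) (τ t) = x t := by simp only [htinv t ht]
  -- part 1
  constructor
  · rw [hq0, hdq]
    simp only [Pi.smul_apply, smul_eq_mul]
    have h2 : (∑ i, ∑ j, A (x t) i j * ((2 * (h - V (x t)))⁻¹ * deriv x t i)
          * ((2 * (h - V (x t)))⁻¹ * deriv x t j))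
        = (2 * (h - V (x t)))⁻¹ * ((2 * (h - V (x t)))⁻¹
          * (∑ i, ∑ j, A (x t) i j * deriv x t i * deriv x t j)) := by
      simp only [Finset.mul_sum]
      exact Finset.sum_congr rfl fun i _ => Finset.sum_congr rfl fun j _ => by ring
    rw [h2, hE]
    field_simp
    exact div_self (sub_ne_zero.2 (hh _ htU).ne')
  -- part 2
  · intro i
    rw [hq0, hddq, hdq]
    simp only [Pi.smul_apply, Pi.add_apply, smul_eq_mul]
    rw [hS]
    have hcontr : ∀ (vv : Fin m → ℝ),
        (∑ k, (∑ l, (A (x t))⁻¹ i l * A (x t) l k) * vv k) = vv i :=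
      fun vv => contract_aux _ _ hBA i vv
    have hT2 : ∑ j, ∑ k, (pd j V (x t) * deriv x t j)
          * ((∑ l, (A (x t))⁻¹ i l * A (x t) l k) * deriv x t k)
        = (∑ j, pd j V (x t) * deriv x t j) * deriv x t i := by
      rw [Finset.sum_mul]
      refine Finset.sum_congr rfl fun j _ => ?_
      rw [← Finset.mul_sum, hcontr]
    have hT3 : ∑ j, ∑ k, (pd k V (x t) * deriv x t k)
          * ((∑ l, (A (x t))⁻¹ i l * A (x t) l j) * deriv x t j)
        = (∑ j, pd j V (x t) * deriv x t j) * deriv x t i := by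
      rw [Finset.sum_comm]; exact hT2
    have hT1 : ∑ j, ∑ k, (∑ l, (A (x t))⁻¹ i l * pd l V (x t))
          * (A (x t) j k * deriv x t j * deriv x t k)
        = (∑ l, (A (x t))⁻¹ i l * pd l V (x t)) * (2 * (h - V (x t))) := by
      simp only [← Finset.mul_sum]
      rw [hE]
    have hYkey : ∀ j k, (∑ l, (A (x t))⁻¹ i l * (pd l V (x t) * A (x t) j k
            - pd j V (x t) * A (x t) l k - pd k V (x t) * A (x t) l j))
          * deriv x t j * deriv x t k
        = (∑ l, (A (x t))⁻¹ i l * pd l V (x t)) * (A (x t) j k * deriv x t j * deriv x t k)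
          - (pd j V (x t) * deriv x t j)
            * ((∑ l, (A (x t))⁻¹ i l * A (x t) l k) * deriv x t k)
          - (pd k V (x t) * deriv x t k)
            * ((∑ l, (A (x t))⁻¹ i l * A (x t) l j) * deriv x t j) := by
      intro j k
      simp only [Finset.sum_mul, Finset.mul_sum, mul_sub, sub_mul, ← Finset.sum_sub_distrib]
      exact Finset.sum_congr rfl fun l _ => by ring
    have hY : ∑ j, ∑ k, (∑ l, (A (x t))⁻¹ i l * (pd l V (x t) * A (x t) j k
            - pd j V (x t) * A (x t) l k - pd k V (x t) * A (x t) l j))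
          * deriv x t j * deriv x t k
        = (∑ l, (A (x t))⁻¹ i l * pd l V (x t)) * (2 * (h - V (x t)))
          - (∑ j, pd j V (x t) * deriv x t j) * deriv x t i
          - (∑ j, pd j V (x t) * deriv x t j) * deriv x t i := by
      calc ∑ j, ∑ k, (∑ l, (A (x t))⁻¹ i l * (pd l V (x t) * A (x t) j k
            - pd j V (x t) * A (x t) l k - pd k V (x t) * A (x t) l j))
          * deriv x t j * deriv x t k
          = ∑ j, ∑ k,
            ((∑ l, (A (x t))⁻¹ i l * pd l V (x t)) * (A (x t) j k * deriv x t j * deriv x t k)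
            - (pd j V (x t) * deriv x t j)
              * ((∑ l, (A (x t))⁻¹ i l * A (x t) l k) * deriv x t k)
            - (pd k V (x t) * deriv x t k)
              * ((∑ l, (A (x t))⁻¹ i l * A (x t) l j) * deriv x t j)) :=
          Finset.sum_congr rfl fun j _ => Finset.sum_congr rfl fun k _ => hYkey j k
        _ = (∑ j, ∑ k, (∑ l, (A (x t))⁻¹ i l * pd l V (x t))
              * (A (x t) j k * deriv x t j * deriv x t k))
            - (∑ j, ∑ k, (pd j V (x t) * deriv x t j)
              * ((∑ l, (A (x t))⁻¹ i l * A (x t) l k) * deriv x t k))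
            - (∑ j, ∑ k, (pd k V (x t) * deriv x t k)
              * ((∑ l, (A (x t))⁻¹ i l * A (x t) l j) * deriv x t j)) := by
          simp only [Finset.sum_sub_distrib]
        _ = _ := by rw [hT1, hT2, hT3]
    have hGbar : ∑ j, ∑ k, christoffel (fun y => (2 * (h - V y)) • A y) (x t) i j k
          * ((2 * (h - V (x t)))⁻¹ * deriv x t j) * ((2 * (h - V (x t)))⁻¹ * deriv x t k)
        = (2 * (h - V (x t)))⁻¹ * (2 * (h - V (x t)))⁻¹
            * (∑ j, ∑ k, christoffel A (x t) i j k * deriv x t j * deriv x t k)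
          + (2 * (h - V (x t)))⁻¹ * (2 * (h - V (x t)))⁻¹ * (2 * (h - V (x t)))⁻¹
            * ((∑ l, (A (x t))⁻¹ i l * pd l V (x t)) * (2 * (h - V (x t)))
              - (∑ j, pd j V (x t) * deriv x t j) * deriv x t i
              - (∑ j, pd j V (x t) * deriv x t j) * deriv x t i) := by
      rw [← hY]
      calc ∑ j, ∑ k, christoffel (fun y => (2 * (h - V y)) • A y) (x t) i j k
          * ((2 * (h - V (x t)))⁻¹ * deriv x t j) * ((2 * (h - V (x t)))⁻¹ * deriv x t k)
          = ∑ j, ∑ k,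
            ((2 * (h - V (x t)))⁻¹ * (2 * (h - V (x t)))⁻¹
              * (christoffel A (x t) i j k * deriv x t j * deriv x t k)
            + (2 * (h - V (x t)))⁻¹ * (2 * (h - V (x t)))⁻¹ * (2 * (h - V (x t)))⁻¹
              * ((∑ l, (A (x t))⁻¹ i l * (pd l V (x t) * A (x t) j k
                  - pd j V (x t) * A (x t) l k - pd k V (x t) * A (x t) l j))
                * deriv x t j * deriv x t k)) :=
          Finset.sum_congr rfl fun j _ => Finset.sum_congr rfl fun k _ => by
            rw [hchrsplit i j k]; ring
        _ = _ := by
          simp only [Finset.sum_add_distrib, ← Finset.mul_sum]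
    have hRHS : ∑ k, ∑ j, ((2 * (h - V (x t))) • A (x t))⁻¹ i k
          * (κ (x t) k j - κ (x t) j k) * ((2 * (h - V (x t)))⁻¹ * deriv x t j)
        = (2 * (h - V (x t)))⁻¹ * (2 * (h - V (x t)))⁻¹
          * ∑ k, ∑ j, (A (x t))⁻¹ i k * (κ (x t) k j - κ (x t) j k) * deriv x t j := by
      simp only [hcinv, Matrix.smul_apply, smul_eq_mul]
      calc ∑ k, ∑ j, (2 * (h - V (x t)))⁻¹ * (A (x t))⁻¹ i k
            * (κ (x t) k j - κ (x t) j k) * ((2 * (h - V (x t)))⁻¹ * deriv x t j)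
          = ∑ k, ∑ j, (2 * (h - V (x t)))⁻¹ * (2 * (h - V (x t)))⁻¹
            * ((A (x t))⁻¹ i k * (κ (x t) k j - κ (x t) j k) * deriv x t j) :=
          Finset.sum_congr rfl fun k _ => Finset.sum_congr rfl fun j _ => by ring
        _ = _ := by simp only [← Finset.mul_sum]
    rw [hGbar, hRHS, ← hmotion t ht i]
    have hne' : h - V (x t) ≠ 0 := sub_ne_zero.2 (hh _ htU).ne'
    field_simp
    ring
end

section
/- Let Q : ℝ → Matrix 3 3 ℝ be differentiable with Q(t) ∈ SO(3) for all t (i.e. Q(t)ᵀ·Q(t) = 1 and det Q(t) = 1), and let Ω be a fixed real 3×3 skew-symmetric matrix. Let ν : ℝ → ℝ³ be the curve determined by hat(ν(t)) = Q(t)ᵀ · Ω · Q(t) (well-defined since Q(t)ᵀΩQ(t) is skew-symmetric), and at a point t₀ let ω ∈ ℝ³ be the vector with hat(ω) = Q(t₀)ᵀ · Q′(t₀) (well-defined since Q(t₀)ᵀQ′(t₀) is skew-symmetric). Then ν is differentiable at t₀ and ν′(t₀) = ν(t₀) ×₃ ω. -/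
/-!
Differentiating `hat ν = QᵀΩQ` and substituting `Q' = Q · hat ω` (as `Q Qᵀ = 1`) turns the
derivative into the commutator `⁅hat ν, hat ω⁆`, which is `hat (ν ×₃ ω)`.
-/

open Matrix

attribute [local instance] Matrix.normedAddCommGroup Matrix.normedSpace

/-- The standard isomorphism `hat : ℝ³ → so(3)`, with `(hat ω)·x = ω ×₃ x`. -/
def hat (ω : Fin 3 → ℝ) : Matrix (Fin 3) (Fin 3) ℝ :=
  !![0, -ω 2, ω 1; ω 2, 0, -ω 0; -ω 1, ω 0, 0]

/-- The inverse `f : so(3) → ℝ³` of `hat`. -/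
def vee (M : Matrix (Fin 3) (Fin 3) ℝ) : Fin 3 → ℝ :=
  ![M 2 1, M 0 2, M 1 0]

lemma vee_hat (a : Fin 3 → ℝ) : vee (hat a) = a := by
  ext i; fin_cases i <;> simp [vee, hat]

lemma hat_transpose (a : Fin 3 → ℝ) : (hat a)ᵀ = -hat a := by
  ext i j; fin_cases i <;> fin_cases j <;> simp [hat]

lemma hat_crossProduct (a b : Fin 3 → ℝ) : hat (a ⨯₃ b) = ⁅hat a, hat b⁆ := by
  rw [Ring.lie_def]
  ext i j
  fin_cases i <;> fin_cases j <;> simp [hat, cross_apply] <;> ring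

lemma transpose_mul_mul_add_eq_lie_of_transpose_eq_neg {n R : Type*} [Fintype n]
    [DecidableEq n] [CommRing R] (Q Ω : Matrix n n R) {S : Matrix n n R} (hS : Sᵀ = -S) :
    (Q * S)ᵀ * Ω * Q + Qᵀ * Ω * (Q * S) = ⁅Qᵀ * Ω * Q, S⁆ := by
  rw [transpose_mul, hS, Ring.lie_def]
  noncomm_ring

section Calculus

variable {m n p : Type*} {t : ℝ}

lemma hasDerivAt_matrix_iff [Fintype n] {A : ℝ → Matrix m n ℝ} {A' : Matrix m n ℝ} :
    HasDerivAt A A' t ↔ ∀ i j, HasDerivAt (fun t => A t i j) (A' i j) t :=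
  ⟨fun h i j => hasDerivAt_pi.1 (hasDerivAt_pi.1 h i) j,
    fun h => hasDerivAt_pi.2 fun i => hasDerivAt_pi.2 (h i)⟩

lemma HasDerivAt.matrix_transpose [Fintype m] [Fintype n] {A : ℝ → Matrix m n ℝ}
    {A' : Matrix m n ℝ} (hA : HasDerivAt A A' t) : HasDerivAt (fun t => (A t)ᵀ) A'ᵀ t :=
  hasDerivAt_matrix_iff.2 fun i j => hasDerivAt_matrix_iff.1 hA j i

lemma HasDerivAt.matrix_mul [Fintype n] [Fintype p] {A : ℝ → Matrix m n ℝ}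
    {B : ℝ → Matrix n p ℝ} {A' : Matrix m n ℝ} {B' : Matrix n p ℝ}
    (hA : HasDerivAt A A' t) (hB : HasDerivAt B B' t) :
    HasDerivAt (fun t => A t * B t) (A' * B t + A t * B') t := by
  refine hasDerivAt_matrix_iff.2 fun i j => ?_
  simp only [Matrix.add_apply, Matrix.mul_apply, ← Finset.sum_add_distrib]
  exact HasDerivAt.fun_sum fun k _ =>
    (hasDerivAt_matrix_iff.1 hA i k).mul (hasDerivAt_matrix_iff.1 hB k j)

lemma HasDerivAt.vee {M : ℝ → Matrix (Fin 3) (Fin 3) ℝ} {M' : Matrix (Fin 3) (Fin 3) ℝ}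
    (hM : HasDerivAt M M' t) : HasDerivAt (fun t => vee (M t)) (vee M') t := by
  refine hasDerivAt_pi.2 fun i => ?_
  fin_cases i <;> exact hasDerivAt_matrix_iff.1 hM _ _

end Calculus

theorem tangent_map_poisson_general {Q : ℝ → Matrix (Fin 3) (Fin 3) ℝ}
    {Q' : ℝ → Matrix (Fin 3) (Fin 3) ℝ}
    (hQ : ∀ t, HasDerivAt Q (Q' t) t)
    (hSO : ∀ t, (Q t)ᵀ * Q t = 1 ∧ (Q t).det = 1)
    {Ω : Matrix (Fin 3) (Fin 3) ℝ}
    (ν : ℝ → Fin 3 → ℝ)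
    (hν : ∀ t, hat (ν t) = (Q t)ᵀ * Ω * Q t)
    (t₀ : ℝ) (ω : Fin 3 → ℝ)
    (hω : hat ω = (Q t₀)ᵀ * Q' t₀) :
    HasDerivAt ν (crossProduct (ν t₀) ω) t₀ := by
  have hQ' : Q' t₀ = Q t₀ * hat ω := by
    rw [hω, ← Matrix.mul_assoc, mul_eq_one_comm.1 (hSO t₀).1, Matrix.one_mul]
  have hM : HasDerivAt (fun t => (Q t)ᵀ * Ω * Q t) (hat (ν t₀ ⨯₃ ω)) t₀ := by
    convert ((hQ t₀).matrix_transpose.matrix_mul (hasDerivAt_const t₀ Ω)).matrix_mul (hQ t₀)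
      using 1
    rw [mul_zero, add_zero, hQ', transpose_mul_mul_add_eq_lie_of_transpose_eq_neg _ _
      (hat_transpose ω), ← hν, hat_crossProduct]
  simpa only [← hν, vee_hat] using hM.vee

/-- Tatarinov's lemma: for a differentiable curve `Q(t) ∈ SO(3)` and a fixed
skew-symmetric `Ω`, the Poisson vector `ν(t)` defined by `hat ν(t) = Q(t)ᵀ·Ω·Q(t)`
satisfies `ν′(t₀) = ν(t₀) ×₃ ω`, where `ω` is the spin, `hat ω = Q(t₀)ᵀ·Q′(t₀)`. -/
theorem tangent_map_poisson {Q : ℝ → Matrix (Fin 3) (Fin 3) ℝ}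
    {Q' : ℝ → Matrix (Fin 3) (Fin 3) ℝ}
    (hQ : ∀ t, HasDerivAt Q (Q' t) t)
    (hSO : ∀ t, (Q t)ᵀ * Q t = 1 ∧ (Q t).det = 1)
    {Ω : Matrix (Fin 3) (Fin 3) ℝ} (hΩ : Ωᵀ = -Ω)
    (ν : ℝ → Fin 3 → ℝ)
    (hν : ∀ t, hat (ν t) = (Q t)ᵀ * Ω * Q t)
    (t₀ : ℝ) (ω : Fin 3 → ℝ)
    (hω : hat ω = (Q t₀)ᵀ * Q' t₀) :
    HasDerivAt ν (crossProduct (ν t₀) ω) t₀ :=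
  tangent_map_poisson_general hQ hSO ν hν t₀ ω hω
end

section
/- Let I₁, I₂, I₃ > 0 and write Iν = (I₁ν₁, I₂ν₂, I₃ν₃) for ν = (ν₁, ν₂, ν₃) ∈ ℝ³. Let ν ∈ ℝ³ with ‖ν‖ = 1 and let ν̇ ∈ ℝ³ with ν·ν̇ = 0. Then the vector ω⁰ = (ν̇ ×₃ Iν)/(Iν·ν) is the unique vector ω ∈ ℝ³ satisfying both Iν·ω = 0 and ν ×₃ ω = ν̇. In coordinates, ω⁰₁ = (I₃ν₃ν̇₂ − I₂ν₂ν̇₃)/(I₁ν₁² + I₂ν₂² + I₃ν₃²), and cyclically for ω⁰₂, ω⁰₃. -/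
open Matrix

/-- Kolosov's relations: for a unit vector `ν` and `ν̇` with `ν·ν̇ = 0`, the vector
`ω⁰ = (ν̇ ×₃ Iν)/(Iν·ν)` is the unique vector `ω` with `Iν·ω = 0` and `ν ×₃ ω = ν̇`;
in coordinates `ω⁰₁ = (I₃ν₃ν̇₂ − I₂ν₂ν̇₃)/(I₁ν₁² + I₂ν₂² + I₃ν₃²)` and cyclically. -/
theorem horizontal_lift_spin (I₁ I₂ I₃ : ℝ) (hI₁ : 0 < I₁) (hI₂ : 0 < I₂) (hI₃ : 0 < I₃)
    (ν νd : Fin 3 → ℝ)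
    (hν : ν 0 ^ 2 + ν 1 ^ 2 + ν 2 ^ 2 = 1)
    (hort : ν 0 * νd 0 + ν 1 * νd 1 + ν 2 * νd 2 = 0) :
    ∀ Iν : Fin 3 → ℝ, Iν = ![I₁ * ν 0, I₂ * ν 1, I₃ * ν 2] →
    ∀ ω0 : Fin 3 → ℝ, ω0 = (Iν ⬝ᵥ ν)⁻¹ • crossProduct νd Iν →
      ((Iν ⬝ᵥ ω0 = 0 ∧ crossProduct ν ω0 = νd) ∧
        (∀ ω : Fin 3 → ℝ, Iν ⬝ᵥ ω = 0 ∧ crossProduct ν ω = νd → ω = ω0)) ∧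
      ω0 0 = (I₃ * ν 2 * νd 1 - I₂ * ν 1 * νd 2)
          / (I₁ * ν 0 ^ 2 + I₂ * ν 1 ^ 2 + I₃ * ν 2 ^ 2) ∧
      ω0 1 = (I₁ * ν 0 * νd 2 - I₃ * ν 2 * νd 0)
          / (I₁ * ν 0 ^ 2 + I₂ * ν 1 ^ 2 + I₃ * ν 2 ^ 2) ∧
      ω0 2 = (I₂ * ν 1 * νd 0 - I₁ * ν 0 * νd 1)
          / (I₁ * ν 0 ^ 2 + I₂ * ν 1 ^ 2 + I₃ * ν 2 ^ 2) := by
  intro Iν hIν ω0 hω0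
  subst hIν
  set D : ℝ := I₁ * ν 0 ^ 2 + I₂ * ν 1 ^ 2 + I₃ * ν 2 ^ 2 with hD
  have hm : 0 < min I₁ (min I₂ I₃) := lt_min hI₁ (lt_min hI₂ hI₃)
  have hm1 : min I₁ (min I₂ I₃) ≤ I₁ := min_le_left _ _
  have hm2 : min I₁ (min I₂ I₃) ≤ I₂ := le_trans (min_le_right _ _) (min_le_left _ _)
  have hm3 : min I₁ (min I₂ I₃) ≤ I₃ := le_trans (min_le_right _ _) (min_le_right _ _)
  have hDpos : 0 < D := by
    have hle : min I₁ (min I₂ I₃) * (ν 0 ^ 2 + ν 1 ^ 2 + ν 2 ^ 2) ≤ D := by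
      rw [hD]
      nlinarith [sq_nonneg (ν 0), sq_nonneg (ν 1), sq_nonneg (ν 2)]
    rw [hν, mul_one] at hle
    exact lt_of_lt_of_le hm hle
  have hDne : D ≠ 0 := ne_of_gt hDpos
  have hdot : (![I₁ * ν 0, I₂ * ν 1, I₃ * ν 2] : Fin 3 → ℝ) ⬝ᵥ ν = D := by
    simp [dotProduct, Fin.sum_univ_three, hD]; ring
  have hc0 : ω0 0 = D⁻¹ * (νd 1 * (I₃ * ν 2) - νd 2 * (I₂ * ν 1)) := by
    rw [hω0, hdot]; simp [cross_apply]
  have hc1 : ω0 1 = D⁻¹ * (νd 2 * (I₁ * ν 0) - νd 0 * (I₃ * ν 2)) := by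
    rw [hω0, hdot]; simp [cross_apply]
  have hc2 : ω0 2 = D⁻¹ * (νd 0 * (I₂ * ν 1) - νd 1 * (I₁ * ν 0)) := by
    rw [hω0, hdot]; simp [cross_apply]
  refine ⟨⟨⟨?_, ?_⟩, ?_⟩, ?_, ?_, ?_⟩
  · simp only [dotProduct, Fin.sum_univ_three, Matrix.cons_val_zero, Matrix.cons_val_one,
      Matrix.head_cons, Matrix.cons_val_two, Matrix.tail_cons, hc0, hc1, hc2]
    ring
  · have k0 : ν 1 * ω0 2 - ν 2 * ω0 1 = νd 0 := by
      rw [hc1, hc2]; field_simp; linear_combination (-(I₁ * ν 0)) * hort + νd 0 * hD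
    have k1 : ν 2 * ω0 0 - ν 0 * ω0 2 = νd 1 := by
      rw [hc0, hc2]; field_simp; linear_combination (-(I₂ * ν 1)) * hort + νd 1 * hD
    have k2 : ν 0 * ω0 1 - ν 1 * ω0 0 = νd 2 := by
      rw [hc0, hc1]; field_simp; linear_combination (-(I₃ * ν 2)) * hort + νd 2 * hD
    funext i
    fin_cases i <;>
      simp only [cross_apply, Matrix.cons_val_zero, Matrix.cons_val_one, Matrix.head_cons,
        Matrix.cons_val_two, Matrix.tail_cons, Fin.isValue]
    · exact k0
    · exact k1
    · exact k2
  · rintro ω ⟨h1, h2⟩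
    simp only [dotProduct, Fin.sum_univ_three, Matrix.cons_val_zero, Matrix.cons_val_one,
      Matrix.head_cons, Matrix.cons_val_two, Matrix.tail_cons] at h1
    have e0 : ν 1 * ω 2 - ν 2 * ω 1 = νd 0 := by
      have := congrFun h2 0; simpa [cross_apply] using this
    have e1 : ν 2 * ω 0 - ν 0 * ω 2 = νd 1 := by
      have := congrFun h2 1; simpa [cross_apply] using this
    have e2 : ν 0 * ω 1 - ν 1 * ω 0 = νd 2 := by
      have := congrFun h2 2; simpa [cross_apply] using this
    have u0 : ω 0 = ω0 0 := by
      rw [hc0]; field_simp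
      linear_combination ν 0 * h1 + (I₃ * ν 2) * e1 - (I₂ * ν 1) * e2 + ω 0 * hD
    have u1 : ω 1 = ω0 1 := by
      rw [hc1]; field_simp
      linear_combination ν 1 * h1 + (I₁ * ν 0) * e2 - (I₃ * ν 2) * e0 + ω 1 * hD
    have u2 : ω 2 = ω0 2 := by
      rw [hc2]; field_simp
      linear_combination ν 2 * h1 + (I₂ * ν 1) * e0 - (I₁ * ν 0) * e1 + ω 2 * hD
    funext i
    fin_cases i
    · exact u0
    · exact u1
    · exact u2
  · rw [hc0]; field_simp
  · rw [hc1]; field_simp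
  · rw [hc2]; field_simp
end

section
/- Let I₁, I₂, I₃ > 0, let ν ∈ ℝ³ with ‖ν‖ = 1, let ν̇ ∈ ℝ³ with ν·ν̇ = 0, and let ω⁰ = (ν̇ ×₃ Iν)/(Iν·ν) where Iν = (I₁ν₁, I₂ν₂, I₃ν₃). Then I₁(ω⁰₁)² + I₂(ω⁰₂)² + I₃(ω⁰₃)² = I₁I₂I₃·(ν̇₁²/I₁ + ν̇₂²/I₂ + ν̇₃²/I₃)/(I₁ν₁² + I₂ν₂² + I₃ν₃²). -/
open Matrix

/-- The reduced metric on the Poisson sphere: evaluating the kinetic-energy metric on the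
horizontal lift `ω⁰ = (ν̇ ×₃ Iν)/(Iν·ν)` of a tangent vector `ν̇` to the sphere at `ν`
gives `I₁(ω⁰₁)² + I₂(ω⁰₂)² + I₃(ω⁰₃)² =
I₁I₂I₃(ν̇₁²/I₁ + ν̇₂²/I₂ + ν̇₃²/I₃)/(I₁ν₁² + I₂ν₂² + I₃ν₃²)`. -/
theorem reduced_metric_formula (I₁ I₂ I₃ : ℝ) (hI₁ : 0 < I₁) (hI₂ : 0 < I₂) (hI₃ : 0 < I₃)
    (ν νd : Fin 3 → ℝ)
    (hν : ν 0 ^ 2 + ν 1 ^ 2 + ν 2 ^ 2 = 1)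
    (hort : ν 0 * νd 0 + ν 1 * νd 1 + ν 2 * νd 2 = 0) :
    ∀ Iν : Fin 3 → ℝ, Iν = ![I₁ * ν 0, I₂ * ν 1, I₃ * ν 2] →
    ∀ ω0 : Fin 3 → ℝ, ω0 = (Iν ⬝ᵥ ν)⁻¹ • crossProduct νd Iν →
      I₁ * ω0 0 ^ 2 + I₂ * ω0 1 ^ 2 + I₃ * ω0 2 ^ 2
        = I₁ * I₂ * I₃ * (νd 0 ^ 2 / I₁ + νd 1 ^ 2 / I₂ + νd 2 ^ 2 / I₃)
            / (I₁ * ν 0 ^ 2 + I₂ * ν 1 ^ 2 + I₃ * ν 2 ^ 2) := by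
  intro Iν hIν ω0 hω0
  have hD : 0 < I₁ * ν 0 ^ 2 + I₂ * ν 1 ^ 2 + I₃ * ν 2 ^ 2 := by
    have hm : 0 < min I₁ (min I₂ I₃) := lt_min hI₁ (lt_min hI₂ hI₃)
    have e0 : min I₁ (min I₂ I₃) * ν 0 ^ 2 ≤ I₁ * ν 0 ^ 2 :=
      mul_le_mul_of_nonneg_right (min_le_left _ _) (sq_nonneg _)
    have e1 : min I₁ (min I₂ I₃) * ν 1 ^ 2 ≤ I₂ * ν 1 ^ 2 :=
      mul_le_mul_of_nonneg_right ((min_le_right _ _).trans (min_le_left _ _)) (sq_nonneg _)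
    have e2 : min I₁ (min I₂ I₃) * ν 2 ^ 2 ≤ I₃ * ν 2 ^ 2 :=
      mul_le_mul_of_nonneg_right ((min_le_right _ _).trans (min_le_right _ _)) (sq_nonneg _)
    have hsum : min I₁ (min I₂ I₃) * ν 0 ^ 2 + min I₁ (min I₂ I₃) * ν 1 ^ 2
        + min I₁ (min I₂ I₃) * ν 2 ^ 2 = min I₁ (min I₂ I₃) := by
      linear_combination (min I₁ (min I₂ I₃)) * hν
    linarith
  have hdot : Iν ⬝ᵥ ν = I₁ * ν 0 ^ 2 + I₂ * ν 1 ^ 2 + I₃ * ν 2 ^ 2 := by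
    rw [hIν]
    simp [dotProduct, Fin.sum_univ_three]
    ring
  rw [hω0, hdot, hIν]
  simp only [crossProduct, LinearMap.mk₂_apply, Pi.smul_apply, smul_eq_mul,
    cons_val_zero, cons_val_one, head_cons, cons_val_two, tail_cons,
    cons_val', empty_val', cons_val_fin_one]
  rw [eq_div_iff hD.ne']
  have hinv : (I₁ * ν 0 ^ 2 + I₂ * ν 1 ^ 2 + I₃ * ν 2 ^ 2)⁻¹
      * (I₁ * ν 0 ^ 2 + I₂ * ν 1 ^ 2 + I₃ * ν 2 ^ 2) = 1 := inv_mul_cancel₀ hD.ne'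
  have h1 : I₁⁻¹ * I₁ = 1 := inv_mul_cancel₀ hI₁.ne'
  have h2 : I₂⁻¹ * I₂ = 1 := inv_mul_cancel₀ hI₂.ne'
  have h3 : I₃⁻¹ * I₃ = 1 := inv_mul_cancel₀ hI₃.ne'
  linear_combination
    ((I₂ * I₃ * νd 0 ^ 2 + I₁ * I₃ * νd 1 ^ 2 + I₁ * I₂ * νd 2 ^ 2)
        * ((I₁ * ν 0 ^ 2 + I₂ * ν 1 ^ 2 + I₃ * ν 2 ^ 2)⁻¹
            * (I₁ * ν 0 ^ 2 + I₂ * ν 1 ^ 2 + I₃ * ν 2 ^ 2) + 1)) * hinv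
      + (-(I₂ * I₃ * νd 0 ^ 2)) * h1 + (-(I₁ * I₃ * νd 1 ^ 2)) * h2
      + (-(I₁ * I₂ * νd 2 ^ 2)) * h3
      + (-(I₁ * I₂ * I₃ * (ν 0 * νd 0 + ν 1 * νd 1 + ν 2 * νd 2)
            * ((I₁ * ν 0 ^ 2 + I₂ * ν 1 ^ 2 + I₃ * ν 2 ^ 2)⁻¹) ^ 2
            * (I₁ * ν 0 ^ 2 + I₂ * ν 1 ^ 2 + I₃ * ν 2 ^ 2))) * hort
end
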